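/- arXiv:0909.5245 — 8 statements merged into one kernel-verified Lean document; each statement's English description precedes it below -/
import Mathlib

section
/- Suppose that for the solution ({x_n},{y_n}) there exist constants M1, M2 > 0 such that M1·y_n ≤ x_n ≤ M2·y_n for all n ∈ ℕ. Suppose further that A > 0 and that there exists a positive integer η such that for every sequence {c_m}_{m=1}^∞ with c_m ∈ I_β ∪ I_γ for all m, there exist positive integers N1 ≤ N2 ≤ η with Σ_{m=N1}^{N2} c_m ∈ I_B ∪ I_C. Then there exist M > 0 and N ∈ ℕ such that x_n ≤ M and y_n ≤ M for all n > N. -/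
/-! Since `M₁ y ≤ x ≤ M₂ y`, the `y`-terms can be absorbed into the equation for `x`, which
gives `x_n (A + ∑ c_j x_{n-j}) ≤ α + ∑ b_i x_{n-i}` with `b_i > 0` exactly on `I_β ∪ I_γ` and
`c_j > 0` exactly on `I_B ∪ I_C`. Suppose `X = x_{n₀}` is a large record value. As `A > 0`, a
large `x_n` forces some `x_{n-i}` with `b_i > 0` to be at least `ρ x_n`, so walking back `η` such
lags leads through indices carrying values `≥ ρ^η X`. By the choice of `η`, two of these indices
differ by a lag `j` with `c_j > 0`; at the later one the denominator is then at least
`c_j ρ^η X`, while the numerator is at most `α + (∑ b_i) X`. Hence `c_j (ρ^η X)² ≤ α + (∑ b_i) X`,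
which fails for large `X`, so there are no large records and `x` (hence `y`) is bounded. -/

open Finset

/-- The index set of the coefficient function `f` on `{1, …, k}`:
the set of indices `i ∈ {1, …, k}` with `f i > 0`. -/
noncomputable def indexSet (k : ℕ) (f : ℕ → ℝ) : Finset ℕ :=
  (Finset.Icc 1 k).filter fun i => 0 < f i

/-- The iteration condition: for every sequence `c` (indexed by `1, 2, …`)
taking values in `S`, there exist positive integers `N1 ≤ N2 ≤ η` such that
`∑_{m=N1}^{N2} c m ∈ T`. -/
def iterCond (η : ℕ) (S T : Finset ℕ) : Prop :=
  ∀ c : ℕ → ℕ, (∀ m, 1 ≤ m → c m ∈ S) →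
    ∃ N1 N2 : ℕ, 0 < N1 ∧ N1 ≤ N2 ∧ N2 ≤ η ∧ (∑ m ∈ Finset.Icc N1 N2, c m) ∈ T

def IsRationalSubsolution (k : ℕ) (α A : ℝ) (b c x : ℕ → ℝ) : Prop :=
  ∀ n, k ≤ n →
    x n * (A + ∑ j ∈ Icc 1 k, c j * x (n - j)) ≤ α + ∑ i ∈ Icc 1 k, b i * x (n - i)

lemma indexSet_add {k : ℕ} {f g : ℕ → ℝ} (hf : ∀ i, 0 ≤ f i) (hg : ∀ i, 0 ≤ g i) :
    indexSet k (fun i => f i + g i) = indexSet k f ∪ indexSet k g := by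
  ext i
  simp only [indexSet, mem_union, mem_filter, ← and_or_left]
  refine and_congr_right fun _ => ⟨fun h => ?_, fun h => ?_⟩
  · by_contra! h'
    linarith [h'.1, h'.2]
  · rcases h with h | h <;> linarith [hf i, hg i]

lemma indexSet_div {k : ℕ} {f : ℕ → ℝ} {M : ℝ} (hM : 0 < M) :
    indexSet k (fun i => f i / M) = indexSet k f := by
  simp only [indexSet, div_pos_iff_of_pos_right hM]

lemma exists_pos_le_of_mem_indexSet (k : ℕ) (f : ℕ → ℝ) :
    ∃ d > 0, ∀ j ∈ indexSet k f, d ≤ f j := by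
  rcases (indexSet k f).eq_empty_or_nonempty with h | h
  · exact ⟨1, one_pos, by simp [h]⟩
  · obtain ⟨j, hj, hmin⟩ := (indexSet k f).exists_min_image f h
    exact ⟨f j, (mem_filter.1 hj).2, hmin⟩

lemma bddAbove_range_of_large_not_record {x : ℕ → ℝ} (N : ℕ) (M₀ : ℝ)
    (h : ∀ n, N < n → M₀ < x n → ∃ m ≤ n, x n < x m) : BddAbove (Set.range x) := by
  obtain ⟨B, hB⟩ := ((Set.finite_Iic N).image x).bddAbove
  refine ⟨max M₀ B, ?_⟩
  rintro _ ⟨n, rfl⟩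
  induction n using Nat.strong_induction_on with
  | _ n ih =>
    by_contra! hlt
    have hN : N < n := by
      by_contra! hn
      exact hlt.not_ge (le_max_of_le_right (hB ⟨n, hn, rfl⟩))
    obtain ⟨m, hm, hnm⟩ := h n hN ((le_max_left _ _).trans_lt hlt)
    rcases hm.lt_or_eq with hm | rfl
    · linarith [ih m hm]
    · exact hnm.false

def lagWalk (next : ℕ → ℕ) (n₀ : ℕ) : ℕ → ℕ
  | 0 => n₀
  | m + 1 => lagWalk next n₀ m - next (lagWalk next n₀ m)

section lagWalk

variable {next : ℕ → ℕ} {n₀ : ℕ}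

lemma lagWalk_eq_add_sum {a b : ℕ} (hab : a ≤ b)
    (hle : ∀ j < b, next (lagWalk next n₀ j) ≤ lagWalk next n₀ j) :
    lagWalk next n₀ a = lagWalk next n₀ b + ∑ m ∈ Ioc a b, next (lagWalk next n₀ (m - 1)) := by
  induction b, hab using Nat.le_induction with
  | base => simp
  | succ b hab ih =>
    rw [sum_Ioc_succ_top hab, Nat.add_sub_cancel, lagWalk, ih fun j hj => hle j (by omega)]
    have := hle b (by omega)
    omega

lemma lagWalk_bounds {k η : ℕ} {ρ : ℝ} {x : ℕ → ℝ} (hnext : ∀ n, next n ≤ k)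
    (hstep : ∀ n, k ≤ n → ρ ^ η * x n₀ ≤ x n → ρ * x n ≤ x (n - next n))
    (hρ0 : 0 ≤ ρ) (hρ1 : ρ ≤ 1) (hx : ∀ n, 0 ≤ x n) (hn₀ : (η + 1) * k ≤ n₀)
    {m : ℕ} (hm : m ≤ η) :
    (η + 1 - m) * k ≤ lagWalk next n₀ m ∧ ρ ^ m * x n₀ ≤ x (lagWalk next n₀ m) := by
  induction m with
  | zero => simpa [lagWalk] using hn₀
  | succ m ih =>
    obtain ⟨hpos, hval⟩ := ih (by omega)
    have hsplit : (η + 1 - m) * k = (η + 1 - (m + 1)) * k + k := by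
      rw [← Nat.succ_mul]
      congr 1
      omega
    have hk : k ≤ lagWalk next n₀ m := by omega
    have hlarge : ρ ^ η * x n₀ ≤ x (lagWalk next n₀ m) :=
      (mul_le_mul_of_nonneg_right (pow_le_pow_of_le_one hρ0 hρ1 (by omega)) (hx n₀)).trans hval
    refine ⟨?_, ?_⟩
    · have := hnext (lagWalk next n₀ m)
      simp only [lagWalk]
      omega
    · calc ρ ^ (m + 1) * x n₀ = ρ * (ρ ^ m * x n₀) := by ring
        _ ≤ ρ * x (lagWalk next n₀ m) := mul_le_mul_of_nonneg_left hval hρ0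
        _ ≤ x (lagWalk next n₀ (m + 1)) := hstep _ hk hlarge

lemma exists_lag_mem_of_iterCond {S T : Finset ℕ} {k η : ℕ} {ρ : ℝ} {x : ℕ → ℝ}
    (hη : iterCond η S T) (hS : ∀ i ∈ S, i ≤ k) (hρ0 : 0 ≤ ρ) (hρ1 : ρ ≤ 1)
    (hx : ∀ n, 0 ≤ x n) (hn₀ : (η + 1) * k ≤ n₀)
    (hstep : ∀ n, k ≤ n → ρ ^ η * x n₀ ≤ x n → ∃ i ∈ S, ρ * x n ≤ x (n - i)) :
    ∃ n ≤ n₀, k ≤ n ∧ ∃ j ∈ T, ρ ^ η * x n₀ ≤ x n ∧ ρ ^ η * x n₀ ≤ x (n - j) := by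
  obtain ⟨i₀, hi₀, -⟩ := hstep n₀ (le_trans (Nat.le_mul_of_pos_left k η.succ_pos) hn₀)
    (mul_le_of_le_one_left (hx n₀) (pow_le_one₀ hρ0 hρ1))
  -- The lags of the walk must all lie in `S`, so where the step does not apply we pad with `i₀`.
  have hnext : ∀ n, ∃ i ∈ S, k ≤ n → ρ ^ η * x n₀ ≤ x n → ρ * x n ≤ x (n - i) := by
    intro n
    by_cases hn : k ≤ n ∧ ρ ^ η * x n₀ ≤ x n
    · obtain ⟨i, hi, hle⟩ := hstep n hn.1 hn.2
      exact ⟨i, hi, fun _ _ => hle⟩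
    · exact ⟨i₀, hi₀, fun h₁ h₂ => absurd ⟨h₁, h₂⟩ hn⟩
  choose next hnextS hnext using hnext
  have hnext_le : ∀ n, next n ≤ k := fun n => hS _ (hnextS n)
  have hwalk : ∀ m ≤ η, k ≤ lagWalk next n₀ m ∧ ρ ^ η * x n₀ ≤ x (lagWalk next n₀ m) :=
    fun m hm =>
      have ⟨hpos, hval⟩ := lagWalk_bounds hnext_le hnext hρ0 hρ1 hx hn₀ hm
      ⟨le_trans (Nat.le_mul_of_pos_left k (by omega)) hpos,
        (mul_le_mul_of_nonneg_right (pow_le_pow_of_le_one hρ0 hρ1 hm) (hx n₀)).trans hval⟩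
  have hle : ∀ j < η, next (lagWalk next n₀ j) ≤ lagWalk next n₀ j := fun j hj =>
    (hnext_le _).trans (hwalk j hj.le).1
  obtain ⟨N₁, N₂, hN₁, hN₁₂, hN₂, hT⟩ :=
    hη (fun m => next (lagWalk next n₀ (m - 1))) fun m _ => hnextS _
  obtain ⟨N, rfl⟩ : ∃ N, N₁ = N + 1 := ⟨N₁ - 1, by omega⟩
  rw [Icc_add_one_left_eq_Ioc] at hT
  have htele := lagWalk_eq_add_sum (n₀ := n₀) (show N ≤ N₂ by omega) fun i hi => hle i (by omega)
  have hstart := lagWalk_eq_add_sum (n₀ := n₀) (Nat.zero_le N) fun i hi => hle i (by omega)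
  simp only [lagWalk] at hstart
  refine ⟨_, by omega, (hwalk N (by omega)).1, _, hT, (hwalk N (by omega)).2, ?_⟩
  rw [htele, Nat.add_sub_cancel]
  exact (hwalk N₂ hN₂).2

end lagWalk

namespace IsRationalSubsolution

variable {k η : ℕ} {α A ρ : ℝ} {b c x : ℕ → ℝ}

lemma exists_mem_indexSet_le (h : IsRationalSubsolution k α A b c x) (hb : ∀ i, 0 ≤ b i)
    (hc : ∀ j, 0 ≤ c j) (hx : ∀ n, 0 ≤ x n) (hρ : 2 * ρ * ∑ i ∈ Icc 1 k, b i ≤ A)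
    {n : ℕ} (hn : k ≤ n) (hxn : 2 * α < A * x n) :
    ∃ i ∈ indexSet k b, ρ * x n ≤ x (n - i) := by
  by_contra! hlt
  have hnum : ∑ i ∈ Icc 1 k, b i * x (n - i) ≤ (∑ i ∈ Icc 1 k, b i) * (ρ * x n) := by
    rw [sum_mul]
    refine sum_le_sum fun i hi => ?_
    rcases (hb i).eq_or_lt with hbi | hbi
    · simp [← hbi]
    · exact mul_le_mul_of_nonneg_left (hlt i (mem_filter.2 ⟨hi, hbi⟩)).le (hb i)
  have hden : A ≤ A + ∑ j ∈ Icc 1 k, c j * x (n - j) :=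
    le_add_of_nonneg_right (sum_nonneg fun j _ => mul_nonneg (hc j) (hx _))
  nlinarith [h n hn, mul_le_mul_of_nonneg_left hden (hx n),
    mul_le_mul_of_nonneg_right hρ (hx n)]

theorem sq_le_of_isRecord (h : IsRationalSubsolution k α A b c x) (hb : ∀ i, 0 ≤ b i)
    (hc : ∀ j, 0 ≤ c j) (hx : ∀ n, 0 ≤ x n) (hη : iterCond η (indexSet k b) (indexSet k c))
    (hρ0 : 0 ≤ ρ) (hρ1 : ρ ≤ 1) (hρ : 2 * ρ * ∑ i ∈ Icc 1 k, b i ≤ A)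
    {d : ℝ} (hd : ∀ j ∈ indexSet k c, d ≤ c j) {n₀ : ℕ} (hn₀ : (η + 1) * k ≤ n₀)
    (hrecord : ∀ m ≤ n₀, x m ≤ x n₀) (hlarge : 2 * α < A * (ρ ^ η * x n₀)) :
    d * (ρ ^ η * x n₀) ^ 2 ≤ α + (∑ i ∈ Icc 1 k, b i) * x n₀ := by
  set L := ρ ^ η * x n₀
  have hL0 : 0 ≤ L := mul_nonneg (pow_nonneg hρ0 η) (hx n₀)
  have hA : 0 ≤ A := le_trans (by have := sum_nonneg fun i (_ : i ∈ Icc 1 k) => hb i; positivity) hρ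
  obtain ⟨n, hn_le, hnk, j, hT, hLn, hLj⟩ := exists_lag_mem_of_iterCond hη
    (fun i hi => (mem_Icc.1 (mem_filter.1 hi).1).2) hρ0 hρ1 hx hn₀ fun n hn hLn =>
      h.exists_mem_indexSet_le hb hc hx hρ hn (hlarge.trans_le (mul_le_mul_of_nonneg_left hLn hA))
  have hsum : 0 ≤ ∑ j ∈ Icc 1 k, c j * x (n - j) := sum_nonneg fun j _ => mul_nonneg (hc j) (hx _)
  have hden : d * L ≤ A + ∑ j ∈ Icc 1 k, c j * x (n - j) :=
    calc d * L ≤ c j * x (n - j) := mul_le_mul (hd j hT) hLj hL0 (hc j)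
      _ ≤ ∑ j ∈ Icc 1 k, c j * x (n - j) :=
        single_le_sum (fun j _ => mul_nonneg (hc j) (hx _)) (mem_filter.1 hT).1
      _ ≤ A + ∑ j ∈ Icc 1 k, c j * x (n - j) := le_add_of_nonneg_left hA
  have hnum : ∑ i ∈ Icc 1 k, b i * x (n - i) ≤ (∑ i ∈ Icc 1 k, b i) * x n₀ := by
    rw [sum_mul]
    exact sum_le_sum fun i _ => mul_le_mul_of_nonneg_left (hrecord _ (by omega)) (hb i)
  calc d * L ^ 2 = L * (d * L) := by ring
    _ ≤ L * (A + ∑ j ∈ Icc 1 k, c j * x (n - j)) := mul_le_mul_of_nonneg_left hden hL0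
    _ ≤ x n * (A + ∑ j ∈ Icc 1 k, c j * x (n - j)) :=
      mul_le_mul_of_nonneg_right hLn (hA.trans (le_add_of_nonneg_right hsum))
    _ ≤ α + ∑ i ∈ Icc 1 k, b i * x (n - i) := h n hnk
    _ ≤ α + (∑ i ∈ Icc 1 k, b i) * x n₀ := by linarith

theorem bddAbove_range (h : IsRationalSubsolution k α A b c x) (hα : 0 ≤ α) (hA : 0 < A)
    (hb : ∀ i, 0 ≤ b i) (hc : ∀ j, 0 ≤ c j) (hx : ∀ n, 0 ≤ x n)
    (hη : iterCond η (indexSet k b) (indexSet k c)) : BddAbove (Set.range x) := by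
  set K := ∑ i ∈ Icc 1 k, b i
  have hK : 0 ≤ K := sum_nonneg fun i _ => hb i
  set ρ := A / (2 * K + A)
  have hρ0 : 0 < ρ := by positivity
  have hρ1 : ρ ≤ 1 := div_le_one_of_le₀ (by linarith) (by positivity)
  have hρ : 2 * ρ * K ≤ A := by
    rw [mul_comm 2 ρ, mul_assoc, div_mul_eq_mul_div, div_le_iff₀ (by positivity)]
    nlinarith
  obtain ⟨d, hd0, hd⟩ := exists_pos_le_of_mem_indexSet k c
  have hL : 0 < ρ ^ η := pow_pos hρ0 η
  -- Past these thresholds a record `X` has `2 α < A ρ^η X` and `α + K X < d (ρ^η X)²`.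
  refine bddAbove_range_of_large_not_record ((η + 1) * k)
    (max 1 (max (2 * α / (A * ρ ^ η)) ((α + K + 1) / (d * (ρ ^ η) ^ 2)))) fun n hn hX => ?_
  simp only [max_lt_iff] at hX
  obtain ⟨hX1, hXα, hXK⟩ := hX
  rw [div_lt_iff₀ (by positivity)] at hXα hXK
  by_contra! hrecord
  have := h.sq_le_of_isRecord hb hc hx hη hρ0.le hρ1 hρ hd hn.le hrecord (by linarith)
  nlinarith

end IsRationalSubsolution

theorem isRationalSubsolution_of_comparable {k : ℕ} {α A M1 M2 : ℝ} {β γ B C x y : ℕ → ℝ}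
    (hγ : ∀ i, 0 ≤ γ i) (hC : ∀ j, 0 ≤ C j) (hx : ∀ n, 0 ≤ x n) (hM1 : 0 < M1) (hM2 : 0 < M2)
    (hcmp : ∀ n, M1 * y n ≤ x n ∧ x n ≤ M2 * y n)
    (hxden : ∀ n, k ≤ n →
      0 < A + ∑ j ∈ Icc 1 k, B j * x (n - j) + ∑ j ∈ Icc 1 k, C j * y (n - j))
    (hxrec : ∀ n, k ≤ n → x n =
      (α + ∑ i ∈ Icc 1 k, β i * x (n - i) + ∑ i ∈ Icc 1 k, γ i * y (n - i)) /
      (A + ∑ j ∈ Icc 1 k, B j * x (n - j) + ∑ j ∈ Icc 1 k, C j * y (n - j))) :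
    IsRationalSubsolution k α A (fun i => β i + γ i / M1) (fun j => B j + C j / M2) x := by
  intro n hn
  have hy : ∀ m, γ m * y (n - m) ≤ γ m / M1 * x (n - m) := fun m => by
    rw [div_mul_eq_mul_div, le_div_iff₀ hM1, mul_assoc]
    exact mul_le_mul_of_nonneg_left (by linarith [(hcmp (n - m)).1]) (hγ m)
  have hx' : ∀ m, C m / M2 * x (n - m) ≤ C m * y (n - m) := fun m => by
    rw [div_mul_eq_mul_div, div_le_iff₀ hM2, mul_assoc]
    exact mul_le_mul_of_nonneg_left (by linarith [(hcmp (n - m)).2]) (hC m)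
  simp only [add_mul, sum_add_distrib]
  calc x n * (A + (∑ j ∈ Icc 1 k, B j * x (n - j) + ∑ j ∈ Icc 1 k, C j / M2 * x (n - j)))
      ≤ x n * (A + ∑ j ∈ Icc 1 k, B j * x (n - j) + ∑ j ∈ Icc 1 k, C j * y (n - j)) := by
        rw [← add_assoc]
        exact mul_le_mul_of_nonneg_left (add_le_add_right (sum_le_sum fun j _ => hx' j) _) (hx n)
    _ = α + ∑ i ∈ Icc 1 k, β i * x (n - i) + ∑ i ∈ Icc 1 k, γ i * y (n - i) := by
        rw [hxrec n hn, div_mul_cancel₀ _ (hxden n hn).ne']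
    _ ≤ α + (∑ i ∈ Icc 1 k, β i * x (n - i) + ∑ i ∈ Icc 1 k, γ i / M1 * x (n - i)) := by
        rw [← add_assoc]
        exact add_le_add_right (sum_le_sum fun i _ => hy i) _

theorem stmt_0_general
    (k : ℕ)
    (α A : ℝ) (β γ B C : ℕ → ℝ)
    (hα : 0 ≤ α)
    (hβ : ∀ i, 0 ≤ β i) (hγ : ∀ i, 0 ≤ γ i) (hB : ∀ j, 0 ≤ B j) (hC : ∀ j, 0 ≤ C j)
    (x y : ℕ → ℝ)
    (hxnn : ∀ n, 0 ≤ x n)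
    (hxden : ∀ n, k ≤ n →
      0 < A + ∑ j ∈ Icc 1 k, B j * x (n - j) + ∑ j ∈ Icc 1 k, C j * y (n - j))
    (hxrec : ∀ n, k ≤ n → x n =
      (α + ∑ i ∈ Icc 1 k, β i * x (n - i) + ∑ i ∈ Icc 1 k, γ i * y (n - i)) /
      (A + ∑ j ∈ Icc 1 k, B j * x (n - j) + ∑ j ∈ Icc 1 k, C j * y (n - j)))
    (M1 M2 : ℝ) (hM1 : 0 < M1) (hM2 : 0 < M2)
    (hcmp : ∀ n, M1 * y n ≤ x n ∧ x n ≤ M2 * y n)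
    (hApos : 0 < A)
    (hη : ∃ η : ℕ, 0 < η ∧
      iterCond η (indexSet k β ∪ indexSet k γ) (indexSet k B ∪ indexSet k C)) :
    ∃ M : ℝ, 0 < M ∧ ∃ N : ℕ, ∀ n, N < n → x n ≤ M ∧ y n ≤ M := by
  obtain ⟨η, -, hη⟩ := hη
  have hb : ∀ i, 0 ≤ β i + γ i / M1 := fun i => add_nonneg (hβ i) (div_nonneg (hγ i) hM1.le)
  have hc : ∀ j, 0 ≤ B j + C j / M2 := fun j => add_nonneg (hB j) (div_nonneg (hC j) hM2.le)
  rw [← indexSet_div (f := γ) hM1, ← indexSet_add hβ fun i => div_nonneg (hγ i) hM1.le,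
    ← indexSet_div (f := C) hM2, ← indexSet_add hB fun j => div_nonneg (hC j) hM2.le] at hη
  obtain ⟨M, hM⟩ := (isRationalSubsolution_of_comparable hγ hC hxnn hM1 hM2 hcmp hxden
    hxrec).bddAbove_range hα hApos hb hc hxnn hη
  have hxM : ∀ n, x n ≤ M := fun n => hM ⟨n, rfl⟩
  have hM0 : 0 ≤ M := (hxnn 0).trans (hxM 0)
  have hMM1 : 0 ≤ M / M1 := div_nonneg hM0 hM1.le
  refine ⟨M + M / M1 + 1, by positivity, 0, fun n _ => ⟨by linarith [hxM n], ?_⟩⟩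
  have hyM : y n ≤ M / M1 := (le_div_iff₀' hM1).2 ((hcmp n).1.trans (hxM n))
  linarith

theorem stmt_0
    (k : ℕ) (hk : 0 < k)
    (α A p q : ℝ) (β γ B C δ ε D E : ℕ → ℝ)
    (hα : 0 ≤ α) (hA : 0 ≤ A) (hp : 0 ≤ p) (hq : 0 ≤ q)
    (hβ : ∀ i, 0 ≤ β i) (hγ : ∀ i, 0 ≤ γ i) (hB : ∀ j, 0 ≤ B j) (hC : ∀ j, 0 ≤ C j)
    (hδ : ∀ i, 0 ≤ δ i) (hε : ∀ i, 0 ≤ ε i) (hD : ∀ j, 0 ≤ D j) (hE : ∀ j, 0 ≤ E j)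
    (x y : ℕ → ℝ)
    (hxnn : ∀ n, 0 ≤ x n) (hynn : ∀ n, 0 ≤ y n)
    (hxden : ∀ n, k ≤ n →
      0 < A + ∑ j ∈ Icc 1 k, B j * x (n - j) + ∑ j ∈ Icc 1 k, C j * y (n - j))
    (hyden : ∀ n, k ≤ n →
      0 < q + ∑ j ∈ Icc 1 k, D j * x (n - j) + ∑ j ∈ Icc 1 k, E j * y (n - j))
    (hxrec : ∀ n, k ≤ n → x n =
      (α + ∑ i ∈ Icc 1 k, β i * x (n - i) + ∑ i ∈ Icc 1 k, γ i * y (n - i)) /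
      (A + ∑ j ∈ Icc 1 k, B j * x (n - j) + ∑ j ∈ Icc 1 k, C j * y (n - j)))
    (hyrec : ∀ n, k ≤ n → y n =
      (p + ∑ i ∈ Icc 1 k, δ i * x (n - i) + ∑ i ∈ Icc 1 k, ε i * y (n - i)) /
      (q + ∑ j ∈ Icc 1 k, D j * x (n - j) + ∑ j ∈ Icc 1 k, E j * y (n - j)))
    (M1 M2 : ℝ) (hM1 : 0 < M1) (hM2 : 0 < M2)
    (hcmp : ∀ n, M1 * y n ≤ x n ∧ x n ≤ M2 * y n)
    (hApos : 0 < A)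
    (hη : ∃ η : ℕ, 0 < η ∧
      iterCond η (indexSet k β ∪ indexSet k γ) (indexSet k B ∪ indexSet k C)) :
    ∃ M : ℝ, 0 < M ∧ ∃ N : ℕ, ∀ n, N < n → x n ≤ M ∧ y n ≤ M :=
  stmt_0_general k α A β γ B C hα hβ hγ hB hC x y hxnn hxden hxrec M1 M2 hM1 hM2 hcmp hApos hη
end

section
/- Suppose that for the solution ({x_n},{y_n}) there exist constants M1, M2 > 0 such that M1·y_n ≤ x_n ≤ M2·y_n for all n ∈ ℕ. Suppose further that q > 0 and that there exists a positive integer η such that for every sequence {c_m}_{m=1}^∞ with c_m ∈ I_δ ∪ I_ε for all m, there exist positive integers N1 ≤ N2 ≤ η with Σ_{m=N1}^{N2} c_m ∈ I_D ∪ I_E. Then there exist M > 0 and N ∈ ℕ such that x_n ≤ M and y_n ≤ M for all n > N. -/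
open Finset

/-! Put φᵢ = δᵢ M₂ + εᵢ and ψⱼ = Dⱼ M₁ + Eⱼ. Comparability of x and y turns the y-equation into
the scalar inequality y_n (q + ∑ ψⱼ y_{n-j}) ≤ p + ∑ φᵢ y_{n-i}, whose index sets are
I_δ ∪ I_ε and I_D ∪ I_E. Take M huge and suppose y_n is the first term above M. The
numerator then forces some y_{n-i} with φᵢ > 0 to be at least a constant multiple of y_n;
repeating this η times gives a chain of large terms with steps in I_δ ∪ I_ε, and the
iteration hypothesis yields two of them, y_m and y_{m-d}, with ψ_d > 0. Their product is of
order M², whereas the inequality at m bounds it by O(M), since y_{m-1}, …, y_{m-k} ≤ M. -/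

open Filter

/-- Step `j` of the descent chain from `n` that steps down by `f` sits at `n - chainOffset f n j`. -/
def chainOffset (f : ℕ → ℕ) (n : ℕ) : ℕ → ℕ
  | 0 => 0
  | j + 1 => chainOffset f n j + f (n - chainOffset f n j)

theorem iterCond.exists_add_mem {η : ℕ} {S T : Finset ℕ} (h : iterCond η S T) (hη : 0 < η)
    {off : ℕ → ℕ} (hoff : ∀ j < η, ∃ i ∈ S, off (j + 1) = off j + i) :
    ∃ j₁ j₂, j₁ < j₂ ∧ j₂ ≤ η ∧ ∃ d ∈ T, off j₂ = off j₁ + d := by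
  choose! g hgS hg using hoff
  -- only the first `η` terms matter, so clamp the index to get a sequence with values in `S`
  obtain ⟨N₁, N₂, hN₁, hN₁₂, hN₂, hT⟩ :=
    h (fun m => g (min m η - 1)) fun m hm => hgS _ (by omega)
  have telescope : ∀ j, N₁ - 1 ≤ j → j ≤ η →
      off j = off (N₁ - 1) + ∑ m ∈ Icc N₁ j, g (min m η - 1) := by
    intro j hj
    induction j, hj using Nat.le_induction with
    | base => intro _; rw [Icc_eq_empty (by omega), sum_empty, add_zero]
    | succ j hj ih =>
      intro hjη
      rw [sum_Icc_succ_top (by omega), ← add_assoc, ← ih (by omega),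
        show min (j + 1) η - 1 = j by omega, hg j (by omega)]
  exact ⟨N₁ - 1, N₂, by omega, hN₂, _, hT, telescope N₂ (by omega) hN₂⟩

theorem eventually_add_mul_lt_mul_sq {κ : ℝ} (hκ : 0 < κ) (B C : ℝ) :
    ∀ᶠ M in atTop, B + C * M < κ * M ^ 2 := by
  filter_upwards [eventually_ge_atTop 1, eventually_ge_atTop ((|B| + |C| + 1) / κ)] with M h1 h2
  have hκM : |B| + |C| + 1 ≤ κ * M := by rwa [div_le_iff₀' hκ] at h2
  nlinarith [le_abs_self B, le_abs_self C, abs_nonneg B, abs_nonneg C,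
    mul_le_mul_of_nonneg_right hκM (by linarith : (0:ℝ) ≤ M),
    mul_le_mul_of_nonneg_left h1 (abs_nonneg B),
    mul_le_mul_of_nonneg_right (le_abs_self C) (by linarith : (0:ℝ) ≤ M)]

section Descent

variable {k η : ℕ} {S T : Finset ℕ} {a Z₀ M : ℝ} {y : ℕ → ℝ} {f : ℕ → ℕ}

theorem chainOffset_spec (hf : ∀ m, k ≤ m → Z₀ < y m → f m ∈ S ∧ a * y m ≤ y (m - f m))
    (hSk : ∀ i ∈ S, i ≤ k) (ha : 0 < a) (ha₁ : a ≤ 1) (hM : 0 ≤ M) (hZ₀ : Z₀ < a ^ η * M)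
    {n : ℕ} (hn : k + k * η ≤ n) (hyn : M < y n) :
    (∀ j < η, ∃ i ∈ S, chainOffset f n (j + 1) = chainOffset f n j + i) ∧
      ∀ j ≤ η, chainOffset f n j ≤ k * η ∧ a ^ η * M < y (n - chainOffset f n j) := by
  have hpow : ∀ j ≤ η, a ^ η * M ≤ a ^ j * M := fun j hj =>
    mul_le_mul_of_nonneg_right (pow_le_pow_of_le_one ha.le ha₁ hj) hM
  have hvalid : ∀ j < η, chainOffset f n j ≤ k * j → a ^ j * M < y (n - chainOffset f n j) →
      f (n - chainOffset f n j) ∈ S ∧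
        a * y (n - chainOffset f n j) ≤ y (n - chainOffset f n j - f (n - chainOffset f n j)) := by
    intro j hj hoff hy
    have : k * (j + 1) ≤ k * η := Nat.mul_le_mul_left k hj
    exact hf _ (by rw [Nat.mul_succ] at this; omega) ((hZ₀.trans_le (hpow j hj.le)).trans hy)
  have hinv : ∀ j ≤ η, chainOffset f n j ≤ k * j ∧ a ^ j * M < y (n - chainOffset f n j) := by
    intro j
    induction j with
    | zero => intro _; simpa [chainOffset] using hyn
    | succ j ih =>
      intro hj
      obtain ⟨hoff, hy⟩ := ih (by omega)
      obtain ⟨hS, hstep⟩ := hvalid j hj hoff hy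
      refine ⟨by rw [chainOffset, Nat.mul_succ]; exact Nat.add_le_add hoff (hSk _ hS), ?_⟩
      rw [chainOffset, ← Nat.sub_sub, pow_succ', mul_assoc]
      exact (mul_lt_mul_of_pos_left hy ha).trans_le hstep
  refine ⟨fun j hj => ⟨_, (hvalid j hj (hinv j hj.le).1 (hinv j hj.le).2).1, rfl⟩,
    fun j hj => ⟨(hinv j hj).1.trans (Nat.mul_le_mul_left k hj),
      (hpow j hj).trans_lt (hinv j hj).2⟩⟩

theorem exists_forall_le_of_descent (hη : 0 < η) (hiter : iterCond η S T)
    (hSk : ∀ i ∈ S, i ≤ k) (ha : 0 < a) (ha₁ : a ≤ 1)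
    (hdescent : ∀ n, k ≤ n → Z₀ < y n → ∃ i ∈ S, a * y n ≤ y (n - i))
    {w : ℕ → ℝ} {B C : ℝ} (hw : ∀ d ∈ T, 0 < w d)
    (hbound : ∀ d ∈ T, ∀ n, k ≤ n → ∀ M, (∀ j ∈ Icc 1 k, y (n - j) ≤ M) →
      w d * (y n * y (n - d)) ≤ B + C * M) :
    ∃ M, 0 < M ∧ ∀ n, y n ≤ M := by
  choose! f hf using hdescent
  set e := a ^ η
  have he : 0 < e := pow_pos ha η
  obtain ⟨M, hM, hbase, hZ₀, hsq⟩ : ∃ M, 0 < M ∧ (∀ n ∈ range (k + k * η), y n ≤ M) ∧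
      Z₀ < e * M ∧ ∀ d ∈ T, B + C * M < w d * (e * M) ^ 2 :=
    ((eventually_gt_atTop 0).and <|
      ((eventually_all_finset _).2 fun n _ => eventually_ge_atTop (y n)).and <|
      ((tendsto_id.const_mul_atTop he).eventually_gt_atTop Z₀).and <|
      (eventually_all_finset T).2 fun d hd =>
        (eventually_add_mul_lt_mul_sq (mul_pos (hw d hd) (pow_pos he 2)) B C).mono
          fun M h => by linarith [show w d * (e * M) ^ 2 = w d * e ^ 2 * M ^ 2 by ring]).exists
  refine ⟨M, hM, fun n => ?_⟩
  induction n using Nat.strong_induction_on with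
  | _ n ih =>
  by_contra! hyn
  have hn : k + k * η ≤ n := by
    by_contra! h
    exact (hbase n (mem_range.2 h)).not_gt hyn
  obtain ⟨hsteps, hbig⟩ := chainOffset_spec hf hSk ha ha₁ hM.le hZ₀ hn hyn
  obtain ⟨j₁, j₂, hj, hj₂, d, hd, hoff⟩ := hiter.exists_add_mem hη hsteps
  obtain ⟨hoff₁, hy₁⟩ := hbig j₁ (by omega)
  set m := n - chainOffset f n j₁
  have hy₂ : e * M < y (m - d) := by rw [Nat.sub_sub, ← hoff]; exact (hbig j₂ hj₂).2
  have hm : k ≤ m := by omega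
  have hprev : ∀ j ∈ Icc 1 k, y (m - j) ≤ M := fun j hj => ih _ (by rw [mem_Icc] at hj; omega)
  have hprod : (e * M) ^ 2 < y m * y (m - d) := by
    rw [sq]; exact mul_lt_mul'' hy₁ hy₂ (by positivity) (by positivity)
  linarith [mul_lt_mul_of_pos_left hprod (hw d hd), hbound d hd m hm M hprev, hsq d hd]

end Descent

theorem exists_mem_filter_le_sum_mul {ι : Type*} {s : Finset ι} {w u : ι → ℝ} {r : ℝ}
    (hw : ∀ i ∈ s, 0 ≤ w i) (hr : 0 < r) (h : r ≤ ∑ i ∈ s, w i * u i) :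
    ∃ i ∈ s.filter (fun i => 0 < w i), r ≤ (∑ i ∈ s, w i) * u i := by
  have hw' : ∑ i ∈ s with 0 < w i, w i = ∑ i ∈ s, w i :=
    sum_filter_of_ne fun i hi hne => (hw i hi).lt_of_ne' hne
  have hwu : ∑ i ∈ s with 0 < w i, w i * u i = ∑ i ∈ s, w i * u i :=
    sum_filter_of_ne fun i hi hne => (hw i hi).lt_of_ne' (left_ne_zero_of_mul hne)
  have hne : (s.filter fun i => 0 < w i).Nonempty := by
    rw [nonempty_iff_ne_empty]
    intro he
    rw [he, sum_empty] at hwu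
    linarith
  obtain ⟨i, hi, hmax⟩ := (s.filter fun i => 0 < w i).exists_max_image u hne
  refine ⟨i, hi, h.trans ?_⟩
  rw [← hw', ← hwu, sum_mul]
  exact sum_le_sum fun j hj => mul_le_mul_of_nonneg_left (hmax j hj) (mem_filter.1 hj).2.le

section ScalarInequality

variable {k : ℕ} {p q : ℝ} {φ ψ y : ℕ → ℝ}

-- Halving absorbs `p` once `y n > 2p/q`; the extra `+ q` only keeps the ratio below `1`.
theorem exists_mem_indexSet_mul_le (hp : 0 ≤ p) (hq : 0 < q) (hφ : ∀ i, 0 ≤ φ i)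
    (hψ : ∀ j, 0 ≤ ψ j) (hy : ∀ n, 0 ≤ y n)
    (hrec : ∀ n, k ≤ n → y n * (q + ∑ j ∈ Icc 1 k, ψ j * y (n - j)) ≤
      p + ∑ i ∈ Icc 1 k, φ i * y (n - i))
    {n : ℕ} (hn : k ≤ n) (hyn : 2 * p / q < y n) :
    ∃ i ∈ indexSet k φ, q / (2 * (∑ i ∈ Icc 1 k, φ i + q)) * y n ≤ y (n - i) := by
  have hΦ : 0 ≤ ∑ i ∈ Icc 1 k, φ i := sum_nonneg fun i _ => hφ i
  have hpq : 2 * p < q * y n := by rw [div_lt_iff₀ hq] at hyn; linarith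
  have hqy : q * y n ≤ p + ∑ i ∈ Icc 1 k, φ i * y (n - i) := by
    have hΨ : 0 ≤ ∑ j ∈ Icc 1 k, ψ j * y (n - j) :=
      sum_nonneg fun j _ => mul_nonneg (hψ j) (hy _)
    nlinarith [hrec n hn, mul_nonneg (hy n) hΨ]
  obtain ⟨i, hi, hle⟩ := exists_mem_filter_le_sum_mul (s := Icc 1 k) (u := fun i => y (n - i))
    (fun i _ => hφ i) (r := q * y n / 2) (by linarith) (by linarith)
  refine ⟨i, hi, ?_⟩
  rw [div_mul_eq_mul_div, div_le_iff₀ (by positivity)]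
  nlinarith [mul_nonneg hq.le (hy (n - i))]

theorem mul_mul_le_of_mul_le (hq : 0 < q) (hφ : ∀ i, 0 ≤ φ i) (hψ : ∀ j, 0 ≤ ψ j)
    (hy : ∀ n, 0 ≤ y n)
    (hrec : ∀ n, k ≤ n → y n * (q + ∑ j ∈ Icc 1 k, ψ j * y (n - j)) ≤
      p + ∑ i ∈ Icc 1 k, φ i * y (n - i))
    {d n : ℕ} (hd : d ∈ Icc 1 k) (hn : k ≤ n) {M : ℝ} (hM : ∀ j ∈ Icc 1 k, y (n - j) ≤ M) :
    ψ d * (y n * y (n - d)) ≤ p + (∑ i ∈ Icc 1 k, φ i) * M := by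
  have hd_le : ψ d * y (n - d) ≤ ∑ j ∈ Icc 1 k, ψ j * y (n - j) :=
    single_le_sum (f := fun j => ψ j * y (n - j)) (fun j _ => mul_nonneg (hψ j) (hy _)) hd
  calc ψ d * (y n * y (n - d)) = y n * (ψ d * y (n - d)) := by ring
    _ ≤ y n * (q + ∑ j ∈ Icc 1 k, ψ j * y (n - j)) :=
      mul_le_mul_of_nonneg_left (by linarith) (hy n)
    _ ≤ p + ∑ i ∈ Icc 1 k, φ i * y (n - i) := hrec n hn
    _ ≤ p + (∑ i ∈ Icc 1 k, φ i) * M := by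
      rw [sum_mul]
      exact add_le_add_right (sum_le_sum fun i hi => mul_le_mul_of_nonneg_left (hM i hi) (hφ i)) p

theorem exists_forall_le_of_mul_le {η : ℕ} (hη : 0 < η) (hp : 0 ≤ p) (hq : 0 < q)
    (hφ : ∀ i, 0 ≤ φ i) (hψ : ∀ j, 0 ≤ ψ j) (hy : ∀ n, 0 ≤ y n)
    (hrec : ∀ n, k ≤ n → y n * (q + ∑ j ∈ Icc 1 k, ψ j * y (n - j)) ≤
      p + ∑ i ∈ Icc 1 k, φ i * y (n - i))
    (hiter : iterCond η (indexSet k φ) (indexSet k ψ)) :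
    ∃ M, 0 < M ∧ ∀ n, y n ≤ M := by
  have hΦ : 0 ≤ ∑ i ∈ Icc 1 k, φ i := sum_nonneg fun i _ => hφ i
  exact exists_forall_le_of_descent hη hiter (fun i hi => (mem_Icc.1 (mem_filter.1 hi).1).2)
    (by positivity) (by rw [div_le_one (by positivity)]; linarith)
    (fun n hn hyn => exists_mem_indexSet_mul_le hp hq hφ hψ hy hrec hn hyn)
    (fun d hd => (mem_filter.1 hd).2)
    (fun d hd n hn M hM => mul_mul_le_of_mul_le hq hφ hψ hy hrec (mem_filter.1 hd).1 hn hM)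

end ScalarInequality

theorem indexSet_mul_add {k : ℕ} {f g : ℕ → ℝ} {c : ℝ} (hc : 0 < c) (hf : ∀ i, 0 ≤ f i)
    (hg : ∀ i, 0 ≤ g i) : indexSet k (fun i => f i * c + g i) = indexSet k f ∪ indexSet k g := by
  ext i
  simp only [indexSet, mem_union, mem_filter, ← and_or_left]
  refine and_congr_right fun _ => ⟨fun h => ?_, ?_⟩
  · by_contra! h'
    nlinarith [le_antisymm h'.1 (hf i), le_antisymm h'.2 (hg i)]
  · rintro (h | h)
    · nlinarith [hg i]
    · nlinarith [hf i]

theorem mul_add_sum_le_add_sum {k n : ℕ} {p q M₁ M₂ : ℝ} {δ ε D E x y : ℕ → ℝ}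
    (hδ : ∀ i, 0 ≤ δ i) (hD : ∀ j, 0 ≤ D j)
    (hy : ∀ n, 0 ≤ y n) (hcmp : ∀ n, M₁ * y n ≤ x n ∧ x n ≤ M₂ * y n)
    (hden : 0 < q + ∑ j ∈ Icc 1 k, D j * x (n - j) + ∑ j ∈ Icc 1 k, E j * y (n - j))
    (hrec : y n =
      (p + ∑ i ∈ Icc 1 k, δ i * x (n - i) + ∑ i ∈ Icc 1 k, ε i * y (n - i)) /
      (q + ∑ j ∈ Icc 1 k, D j * x (n - j) + ∑ j ∈ Icc 1 k, E j * y (n - j))) :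
    y n * (q + ∑ j ∈ Icc 1 k, (D j * M₁ + E j) * y (n - j)) ≤
      p + ∑ i ∈ Icc 1 k, (δ i * M₂ + ε i) * y (n - i) := by
  have hden_ge : ∑ j ∈ Icc 1 k, (D j * M₁ + E j) * y (n - j) ≤
      ∑ j ∈ Icc 1 k, D j * x (n - j) + ∑ j ∈ Icc 1 k, E j * y (n - j) := by
    rw [← sum_add_distrib]
    exact sum_le_sum fun j _ => by nlinarith [mul_le_mul_of_nonneg_left (hcmp (n - j)).1 (hD j)]
  have hnum_le : ∑ i ∈ Icc 1 k, δ i * x (n - i) + ∑ i ∈ Icc 1 k, ε i * y (n - i) ≤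
      ∑ i ∈ Icc 1 k, (δ i * M₂ + ε i) * y (n - i) := by
    rw [← sum_add_distrib]
    exact sum_le_sum fun i _ => by nlinarith [mul_le_mul_of_nonneg_left (hcmp (n - i)).2 (hδ i)]
  calc y n * (q + ∑ j ∈ Icc 1 k, (D j * M₁ + E j) * y (n - j))
      ≤ y n * (q + ∑ j ∈ Icc 1 k, D j * x (n - j) + ∑ j ∈ Icc 1 k, E j * y (n - j)) :=
        mul_le_mul_of_nonneg_left (by linarith) (hy n)
    _ = p + ∑ i ∈ Icc 1 k, δ i * x (n - i) + ∑ i ∈ Icc 1 k, ε i * y (n - i) := by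
        rw [hrec, div_mul_cancel₀ _ hden.ne']
    _ ≤ p + ∑ i ∈ Icc 1 k, (δ i * M₂ + ε i) * y (n - i) := by linarith

theorem stmt_1_general
    (k : ℕ)
    (p q : ℝ) (δ ε D E : ℕ → ℝ)
    (hp : 0 ≤ p)
    (hδ : ∀ i, 0 ≤ δ i) (hε : ∀ i, 0 ≤ ε i) (hD : ∀ j, 0 ≤ D j) (hE : ∀ j, 0 ≤ E j)
    (x y : ℕ → ℝ)
    (hynn : ∀ n, 0 ≤ y n)
    (hyden : ∀ n, k ≤ n →
      0 < q + ∑ j ∈ Icc 1 k, D j * x (n - j) + ∑ j ∈ Icc 1 k, E j * y (n - j))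
    (hyrec : ∀ n, k ≤ n → y n =
      (p + ∑ i ∈ Icc 1 k, δ i * x (n - i) + ∑ i ∈ Icc 1 k, ε i * y (n - i)) /
      (q + ∑ j ∈ Icc 1 k, D j * x (n - j) + ∑ j ∈ Icc 1 k, E j * y (n - j)))
    (M1 M2 : ℝ) (hM1 : 0 < M1) (hM2 : 0 < M2)
    (hcmp : ∀ n, M1 * y n ≤ x n ∧ x n ≤ M2 * y n)
    (hqpos : 0 < q)
    (hη : ∃ η : ℕ, 0 < η ∧
      iterCond η (indexSet k δ ∪ indexSet k ε) (indexSet k D ∪ indexSet k E)) :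
    ∃ M : ℝ, 0 < M ∧ ∃ N : ℕ, ∀ n, N < n → x n ≤ M ∧ y n ≤ M := by
  obtain ⟨η, hη, hiter⟩ := hη
  rw [← indexSet_mul_add hM2 hδ hε, ← indexSet_mul_add hM1 hD hE] at hiter
  obtain ⟨M, hM, hyM⟩ := exists_forall_le_of_mul_le hη hp hqpos
    (fun i => add_nonneg (mul_nonneg (hδ i) hM2.le) (hε i))
    (fun j => add_nonneg (mul_nonneg (hD j) hM1.le) (hE j)) hynn
    (fun n hn => mul_add_sum_le_add_sum hδ hD hynn hcmp (hyden n hn) (hyrec n hn)) hiter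
  refine ⟨(M2 + 1) * M, by positivity, 0, fun n _ => ⟨?_, ?_⟩⟩
  · nlinarith [(hcmp n).2, hyM n]
  · nlinarith [hyM n]

theorem stmt_1
    (k : ℕ) (hk : 0 < k)
    (α A p q : ℝ) (β γ B C δ ε D E : ℕ → ℝ)
    (hα : 0 ≤ α) (hA : 0 ≤ A) (hp : 0 ≤ p) (hq : 0 ≤ q)
    (hβ : ∀ i, 0 ≤ β i) (hγ : ∀ i, 0 ≤ γ i) (hB : ∀ j, 0 ≤ B j) (hC : ∀ j, 0 ≤ C j)
    (hδ : ∀ i, 0 ≤ δ i) (hε : ∀ i, 0 ≤ ε i) (hD : ∀ j, 0 ≤ D j) (hE : ∀ j, 0 ≤ E j)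
    (x y : ℕ → ℝ)
    (hxnn : ∀ n, 0 ≤ x n) (hynn : ∀ n, 0 ≤ y n)
    (hxden : ∀ n, k ≤ n →
      0 < A + ∑ j ∈ Icc 1 k, B j * x (n - j) + ∑ j ∈ Icc 1 k, C j * y (n - j))
    (hyden : ∀ n, k ≤ n →
      0 < q + ∑ j ∈ Icc 1 k, D j * x (n - j) + ∑ j ∈ Icc 1 k, E j * y (n - j))
    (hxrec : ∀ n, k ≤ n → x n =
      (α + ∑ i ∈ Icc 1 k, β i * x (n - i) + ∑ i ∈ Icc 1 k, γ i * y (n - i)) /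
      (A + ∑ j ∈ Icc 1 k, B j * x (n - j) + ∑ j ∈ Icc 1 k, C j * y (n - j)))
    (hyrec : ∀ n, k ≤ n → y n =
      (p + ∑ i ∈ Icc 1 k, δ i * x (n - i) + ∑ i ∈ Icc 1 k, ε i * y (n - i)) /
      (q + ∑ j ∈ Icc 1 k, D j * x (n - j) + ∑ j ∈ Icc 1 k, E j * y (n - j)))
    (M1 M2 : ℝ) (hM1 : 0 < M1) (hM2 : 0 < M2)
    (hcmp : ∀ n, M1 * y n ≤ x n ∧ x n ≤ M2 * y n)
    (hqpos : 0 < q)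
    (hη : ∃ η : ℕ, 0 < η ∧
      iterCond η (indexSet k δ ∪ indexSet k ε) (indexSet k D ∪ indexSet k E)) :
    ∃ M : ℝ, 0 < M ∧ ∃ N : ℕ, ∀ n, N < n → x n ≤ M ∧ y n ≤ M :=
  stmt_1_general k p q δ ε D E hp hδ hε hD hE x y hynn hyden hyrec M1 M2 hM1 hM2 hcmp hqpos hη
end

section
/- Suppose that for the solution ({x_n},{y_n}) there exist constants M1, M2 > 0 such that M1·y_n ≤ x_n ≤ M2·y_n for all n ∈ ℕ. Suppose A = 0, and that one of the following holds: (i) I_B ∪ I_C ⊆ I_β ∪ I_γ and I_B ≠ ∅; (ii) q = 0, I_D ∪ I_E ⊆ I_δ ∪ I_ε, and I_C ≠ ∅; (iii) p > 0, q > 0, I_D ∪ I_E ⊆ I_δ ∪ I_ε, and I_C ≠ ∅. Suppose further there exists a positive integer η such that for every sequence {c_m}_{m=1}^∞ with c_m ∈ I_β ∪ I_γ for all m, there exist positive integers N1 ≤ N2 ≤ η with Σ_{m=N1}^{N2} c_m ∈ I_B ∪ I_C. Then there exist M > 0 and N ∈ ℕ such that x_n ≤ M and y_n ≤ M for all n >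 N. -/
open Finset

/-!
Comparability `M1 y ≤ x ≤ M2 y` trades every `y`-term for an `x`-term at the cost of a constant.
Index domination then bounds `x` (through `y` in cases (ii) and (iii)) below by some `μ > 0`, so the
`x`-denominator is eventually at least `d μ > 0`. Writing `x_t · Den_t = Num_t` and letting `i(t)`
be the lag in `I_β ∪ I_γ` that maximises `x_{t-i}`, one gets `d μ x_t ≤ α + e x_{t-i(t)}` and
`d x_t x_{t-j} ≤ α + e x_{t-i(t)}` for `j ∈ I_B ∪ I_C`.

If `x` were unbounded, take a record index `N` with `x_N` large and walk back along the lags `i`: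
for `η` steps the chain stays above an affine function of `x_N`, while after the first step it
stays below `x_N`. The iteration condition finds a block of consecutive lags summing to some
`j ∈ I_B ∪ I_C`, and the product inequality at the start of that block bounds a quadratic in
`x_N` by a linear one.
-/

open Filter

section Descent

variable {i : ℕ → ℕ} {k : ℕ}

theorem le_iterate_sub_add_mul (hi : ∀ t, i t ≤ k) (N m : ℕ) :
    N ≤ (fun t => t - i t)^[m] N + m * k := by
  induction m with
  | zero => simp
  | succ m ih =>
    rw [Function.iterate_succ_apply', add_mul, one_mul]
    have := hi ((fun t => t - i t)^[m] N)
    omega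

theorem iterate_sub_eq_add_sum (hi : ∀ t, i t ≤ k) {N a b : ℕ} (hab : a ≤ b) (hbN : b * k ≤ N) :
    (fun t => t - i t)^[a] N =
      (fun t => t - i t)^[b] N + ∑ m ∈ Icc (a + 1) b, i ((fun t => t - i t)^[m - 1] N) := by
  induction b, hab using Nat.le_induction with
  | base => simp
  | succ b hab ih =>
    rw [add_mul, one_mul] at hbN
    have hk : k ≤ (fun t => t - i t)^[b] N := by
      have := le_iterate_sub_add_mul hi N b
      omega
    rw [ih (by omega), sum_Icc_succ_top (by omega), Nat.add_sub_cancel,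
      Function.iterate_succ_apply']
    have := hi ((fun t => t - i t)^[b] N)
    omega

theorem iterate_sub_lt_self (hi₁ : ∀ t, 1 ≤ i t) (hi : ∀ t, i t ≤ k) {N m : ℕ} (hm : 1 ≤ m)
    (hmN : m * k ≤ N) : (fun t => t - i t)^[m] N < N := by
  have hN := iterate_sub_eq_add_sum hi (Nat.zero_le m) hmN
  have : i N ≤ ∑ l ∈ Icc 1 m, i ((fun t => t - i t)^[l - 1] N) :=
    single_le_sum (f := fun l => i ((fun t => t - i t)^[l - 1] N)) (fun _ _ => Nat.zero_le _)
      (mem_Icc.2 ⟨le_rfl, hm⟩)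
  rw [zero_add, Function.iterate_zero_apply] at hN
  have := hi₁ N
  omega

end Descent

theorem exists_affine_lower_bound {a e : ℝ} (ha : 0 < a) (he : 0 < e) (b : ℝ) (n : ℕ) :
    ∃ ε > 0, ∃ C : ℝ, ∀ u : ℕ → ℝ, 0 ≤ u 0 → (∀ m < n, a * u m ≤ b + e * u (m + 1)) →
      ∀ m ≤ n, ε * u 0 - C ≤ u m := by
  induction n with
  | zero => exact ⟨1, one_pos, 0, fun u _ _ m hm => by simp [Nat.le_zero.1 hm]⟩
  | succ n ih =>
    obtain ⟨ε, hε, C, hC⟩ := ih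
    refine ⟨min ε (a * ε / e), by positivity, max C ((a * C + b) / e),
      fun u hu₀ hstep m hm => ?_⟩
    have hprev := hC u hu₀ fun m hm => hstep m (by omega)
    rcases Nat.lt_or_ge m (n + 1) with hm' | hm'
    · have := mul_le_mul_of_nonneg_right (min_le_left ε (a * ε / e)) hu₀
      linarith [hprev m (by omega), le_max_left C ((a * C + b) / e)]
    · obtain rfl : m = n + 1 := by omega
      have h₁ := mul_le_mul_of_nonneg_right (min_le_right ε (a * ε / e)) hu₀
      have h₂ : a * (ε * u 0 - C) ≤ b + e * u (n + 1) :=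
        (mul_le_mul_of_nonneg_left (hprev n le_rfl) ha.le).trans (hstep n (by omega))
      have h₃ : a * ε / e * u 0 - (a * C + b) / e ≤ u (n + 1) := by
        rw [div_mul_eq_mul_div, ← sub_div, div_le_iff₀ he]
        linarith
      linarith [le_max_right C ((a * C + b) / e)]

theorem eventually_linear_lt_mul_sq {ε c : ℝ} (hε : 0 < ε) (hc : 0 < c) (b C e : ℝ) :
    ∀ᶠ X in atTop, 0 ≤ ε * X - C ∧ b + e * X < c * (ε * X - C) ^ 2 := by
  have hlin : Tendsto (fun X => ε * X - C) atTop atTop := by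
    simpa only [sub_eq_add_neg, id_eq] using
      tendsto_atTop_add_const_right _ (-C) (tendsto_id.const_mul_atTop hε)
  have hquad : Tendsto (fun X => c * (ε * X - C) ^ 2 - e * X) atTop atTop := by
    have hslope : Tendsto (fun X => c * ε ^ 2 * X + -(2 * c * ε * C + e)) atTop atTop :=
      tendsto_atTop_add_const_right _ _ (tendsto_id.const_mul_atTop (by positivity))
    refine (tendsto_atTop_add_const_right _ (c * C ^ 2)
      (tendsto_id.atTop_mul_atTop₀ hslope)).congr fun X => ?_
    simp only [id]
    ring
  filter_upwards [hlin.eventually_ge_atTop 0, hquad.eventually_gt_atTop b] with X h₁ h₂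
  exact ⟨h₁, by linarith⟩

theorem exists_gt_forall_le_of_not_bddAbove {x : ℕ → ℝ} (hx : ¬BddAbove (Set.range x))
    (n₁ : ℕ) (X₀ : ℝ) : ∃ N, n₁ < N ∧ X₀ ≤ x N ∧ ∀ n < N, x n ≤ x N := by
  obtain ⟨K₀, hK₀⟩ := ((Set.finite_Iic n₁).image x).bddAbove
  obtain ⟨_, ⟨N₀, rfl⟩, hN₀⟩ := not_bddAbove_iff.1 hx (max K₀ X₀)
  have hex : ∃ N, max K₀ X₀ < x N := ⟨N₀, hN₀⟩
  have hxN : max K₀ X₀ < x (Nat.find hex) := Nat.find_spec hex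
  refine ⟨Nat.find hex, ?_, (le_max_right _ _).trans hxN.le, fun n hn =>
    (not_lt.1 (Nat.find_min hex hn)).trans hxN.le⟩
  by_contra! h
  linarith [hK₀ ⟨_, Set.mem_Iic.2 h, rfl⟩, le_max_left K₀ X₀]

theorem bddAbove_range_of_lag_inequalities {x : ℕ → ℝ} {S T : Finset ℕ} {k η n₀ : ℕ}
    (hS : S ⊆ Icc 1 k) (hiter : iterCond η S T) {a b c e : ℝ} (ha : 0 < a) (hc : 0 < c)
    (he : 0 < e) (i : ℕ → ℕ) (hiS : ∀ t, i t ∈ S)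
    (hstep : ∀ t, n₀ ≤ t → a * x t ≤ b + e * x (t - i t))
    (hprod : ∀ t, n₀ ≤ t → ∀ j ∈ T, c * (x t * x (t - j)) ≤ b + e * x (t - i t)) :
    BddAbove (Set.range x) := by
  have hi₁ : ∀ t, 1 ≤ i t := fun t => (mem_Icc.1 (hS (hiS t))).1
  have hik : ∀ t, i t ≤ k := fun t => (mem_Icc.1 (hS (hiS t))).2
  obtain ⟨ε, hε, C, hchain⟩ := exists_affine_lower_bound ha he b η
  obtain ⟨X₀, hX₀⟩ := eventually_atTop.1 (eventually_linear_lt_mul_sq hε hc b C e)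
  by_contra hx
  obtain ⟨N, hN, hxN, hbefore⟩ := exists_gt_forall_le_of_not_bddAbove hx (n₀ + (η + 1) * k)
    (max X₀ 0)
  set u : ℕ → ℕ := fun m => (fun t => t - i t)^[m] N
  have hsum : ∀ m₁ m₂, m₁ ≤ m₂ → m₂ ≤ η →
      u m₁ = u m₂ + ∑ m ∈ Icc (m₁ + 1) m₂, i (u (m - 1)) := fun m₁ m₂ h₁ h₂ =>
    iterate_sub_eq_add_sum hik h₁ (by nlinarith)
  have hu_ge : ∀ m ≤ η, n₀ ≤ u m := fun m hm => by
    have := le_iterate_sub_add_mul hik N m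
    have : m * k ≤ η * k := Nat.mul_le_mul_right k hm
    nlinarith
  have hu_lt : ∀ m, 1 ≤ m → m ≤ η → u m < N := fun m h₁ h₂ =>
    iterate_sub_lt_self hi₁ hik h₁ (by nlinarith)
  have hnext : ∀ m, u (m + 1) = u m - i (u m) := fun m => Function.iterate_succ_apply' _ _ _
  have hlower : ∀ m ≤ η, ε * x N - C ≤ x (u m) :=
    hchain (fun m => x (u m)) ((le_max_right _ _).trans hxN) fun m hm => by
      simpa only [hnext] using hstep _ (hu_ge m hm.le)
  -- the lags taken at steps `N₁, …, N₂` add up to an index of `T` joining `u (N₁ - 1)` to `u N₂`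
  obtain ⟨N₁, N₂, hN₁, hN₁₂, hN₂, hmem⟩ := hiter (fun m => i (u (m - 1))) fun m _ => hiS _
  have hjoin := hsum (N₁ - 1) N₂ (by omega) hN₂
  have hstepN₁ := hnext (N₁ - 1)
  rw [Nat.sub_add_cancel hN₁] at hjoin hstepN₁
  have key := hprod (u (N₁ - 1)) (hu_ge _ (by omega)) _ hmem
  rw [show u (N₁ - 1) - ∑ m ∈ Icc N₁ N₂, i (u (m - 1)) = u N₂ by omega, ← hstepN₁] at key
  obtain ⟨hL, hlt⟩ := hX₀ (x N) ((le_max_left _ _).trans hxN)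
  have hsq : (ε * x N - C) ^ 2 ≤ x (u (N₁ - 1)) * x (u N₂) := by
    rw [sq]
    exact mul_le_mul (hlower _ (by omega)) (hlower _ hN₂) hL (hL.trans (hlower _ (by omega)))
  have := mul_le_mul_of_nonneg_left hsq hc.le
  have := mul_le_mul_of_nonneg_left (hbefore _ (hu_lt N₁ hN₁ (hN₁₂.trans hN₂))) he.le
  linarith

theorem exists_pos_mul_le {ι : Type*} (s : Finset ι) {u v : ι → ℝ} (hu : ∀ j ∈ s, 0 ≤ u j)
    (hv : ∀ j ∈ s, 0 ≤ v j) (huv : ∀ j ∈ s, 0 < v j → 0 < u j) :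
    ∃ c > 0, ∀ j ∈ s, c * v j ≤ u j := by
  classical
  induction s using Finset.induction_on with
  | empty => exact ⟨1, one_pos, by simp⟩
  | insert j s _ ih =>
    simp only [mem_insert, forall_eq_or_imp] at hu hv huv ⊢
    obtain ⟨c, hc, hcs⟩ := ih hu.2 hv.2 huv.2
    rcases hv.1.eq_or_lt with h₀ | hpos
    · exact ⟨c, hc, by rw [← h₀, mul_zero]; exact hu.1, hcs⟩
    · refine ⟨min c (u j / v j), lt_min hc (div_pos (huv.1 hpos) hpos), ?_, fun l hl => ?_⟩
      · exact (mul_le_mul_of_nonneg_right (min_le_right _ _) hv.1).trans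
          (div_mul_cancel₀ _ hpos.ne').le
      · exact (mul_le_mul_of_nonneg_right (min_le_left _ _) (hv.2 l hl)).trans (hcs l hl)

theorem sum_mul_le_sum_mul {ι : Type*} (s : Finset ι) {w z : ι → ℝ} {Z : ℝ}
    (hw : ∀ j ∈ s, 0 ≤ w j) (hz : ∀ j ∈ s, 0 < w j → z j ≤ Z) :
    ∑ j ∈ s, w j * z j ≤ (∑ j ∈ s, w j) * Z := by
  rw [sum_mul]
  refine sum_le_sum fun j hj => ?_
  rcases (hw j hj).eq_or_lt with h | h
  · simp [← h]
  · exact mul_le_mul_of_nonneg_left (hz j hj h) h.le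

theorem mem_indexSet {k i : ℕ} {f : ℕ → ℝ} : i ∈ indexSet k f ↔ i ∈ Icc 1 k ∧ 0 < f i :=
  mem_filter

theorem mem_indexSet_union_iff {k i : ℕ} {f g : ℕ → ℝ} {M : ℝ} (hf : ∀ i, 0 ≤ f i)
    (hg : ∀ i, 0 ≤ g i) (hM : 0 < M) (hi : i ∈ Icc 1 k) :
    i ∈ indexSet k f ∪ indexSet k g ↔ 0 < f i + g i / M := by
  simp only [mem_union, mem_indexSet, hi, true_and]
  constructor
  · rintro (h | h)
    · exact add_pos_of_pos_of_nonneg h (div_nonneg (hg i) hM.le)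
    · exact add_pos_of_nonneg_of_pos (hf i) (div_pos h hM)
  · contrapose!
    rintro ⟨hf', hg'⟩
    rw [le_antisymm hf' (hf i), le_antisymm hg' (hg i), zero_div, add_zero]

theorem indexSet_union_subset_Icc (k : ℕ) (f g : ℕ → ℝ) :
    indexSet k f ∪ indexSet k g ⊆ Icc 1 k :=
  union_subset (filter_subset _ _) (filter_subset _ _)

def lagSum (k : ℕ) (a : ℝ) (f g x y : ℕ → ℝ) (n : ℕ) : ℝ :=
  a + ∑ i ∈ Icc 1 k, f i * x (n - i) + ∑ i ∈ Icc 1 k, g i * y (n - i)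

section Comparable

variable {k : ℕ} {x y : ℕ → ℝ} {M : ℝ}

theorem lagSum_le (hM : 0 < M) (hyx : ∀ n, M * y n ≤ x n) (a : ℝ) (f : ℕ → ℝ) {g : ℕ → ℝ}
    (hg : ∀ i, 0 ≤ g i) (t : ℕ) :
    lagSum k a f g x y t ≤ a + ∑ i ∈ Icc 1 k, (f i + g i / M) * x (t - i) := by
  have : ∑ i ∈ Icc 1 k, g i * y (t - i) ≤ ∑ i ∈ Icc 1 k, g i / M * x (t - i) :=
    sum_le_sum fun i _ => calc
      g i * y (t - i) = g i / M * (M * y (t - i)) := by field_simp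
      _ ≤ g i / M * x (t - i) := mul_le_mul_of_nonneg_left (hyx _) (div_nonneg (hg i) hM.le)
  simp only [lagSum, add_mul, sum_add_distrib]
  linarith

theorem le_lagSum (hM : 0 < M) (hxy : ∀ n, x n ≤ M * y n) (a : ℝ) (f : ℕ → ℝ) {g : ℕ → ℝ}
    (hg : ∀ i, 0 ≤ g i) (t : ℕ) :
    a + ∑ i ∈ Icc 1 k, (f i + g i / M) * x (t - i) ≤ lagSum k a f g x y t := by
  have : ∑ i ∈ Icc 1 k, g i / M * x (t - i) ≤ ∑ i ∈ Icc 1 k, g i * y (t - i) :=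
    sum_le_sum fun i _ => calc
      g i / M * x (t - i) ≤ g i / M * (M * y (t - i)) :=
        mul_le_mul_of_nonneg_left (hxy _) (div_nonneg (hg i) hM.le)
      _ = g i * y (t - i) := by field_simp
  simp only [lagSum, add_mul, sum_add_distrib]
  linarith

end Comparable

section Recursion

variable {k : ℕ} {x y : ℕ → ℝ} {M₁ M₂ : ℝ}

theorem exists_pos_le_of_indexSet_subset (hM₁ : 0 < M₁) (hM₂ : 0 < M₂) (hx : ∀ n, 0 ≤ x n)
    (hcmp : ∀ n, M₁ * y n ≤ x n ∧ x n ≤ M₂ * y n) {z : ℕ → ℝ} {a b : ℝ} {f g F G : ℕ → ℝ}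
    (ha : 0 ≤ a) (hab : 0 < b → 0 < a) (hf : ∀ i, 0 ≤ f i) (hg : ∀ i, 0 ≤ g i)
    (hF : ∀ i, 0 ≤ F i) (hG : ∀ i, 0 ≤ G i)
    (hsub : indexSet k F ∪ indexSet k G ⊆ indexSet k f ∪ indexSet k g)
    (hden : ∀ n, k ≤ n → 0 < lagSum k b F G x y n)
    (hrec : ∀ n, k ≤ n → z n = lagSum k a f g x y n / lagSum k b F G x y n) :
    ∃ c > 0, ∀ n, k ≤ n → c ≤ z n := by
  obtain ⟨c₁, hc₁, hcoef⟩ := exists_pos_mul_le (Icc 1 k) (u := fun j => f j + g j / M₂)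
    (v := fun j => F j + G j / M₁) (fun j _ => add_nonneg (hf j) (div_nonneg (hg j) hM₂.le))
    (fun j _ => add_nonneg (hF j) (div_nonneg (hG j) hM₁.le))
    fun j hj h => (mem_indexSet_union_iff hf hg hM₂ hj).1
      (hsub ((mem_indexSet_union_iff hF hG hM₁ hj).2 h))
  obtain ⟨c₂, hc₂, hc₂b⟩ : ∃ c₂ > 0, ∀ c ≤ c₂, 0 < c → c * b ≤ a := by
    rcases lt_or_ge 0 b with hb | hb
    · refine ⟨a / b, div_pos (hab hb) hb, fun c hc _ => ?_⟩
      exact (mul_le_mul_of_nonneg_right hc hb.le).trans (div_mul_cancel₀ a hb.ne').le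
    · exact ⟨1, one_pos, fun c _ hc => (mul_nonpos_of_nonneg_of_nonpos hc.le hb).trans ha⟩
  set c := min c₁ c₂
  have hc : 0 < c := lt_min hc₁ hc₂
  refine ⟨c, hc, fun n hn => ?_⟩
  rw [hrec n hn, le_div_iff₀ (hden n hn)]
  calc c * lagSum k b F G x y n
      ≤ c * (b + ∑ j ∈ Icc 1 k, (F j + G j / M₁) * x (n - j)) :=
        mul_le_mul_of_nonneg_left (lagSum_le hM₁ (fun n => (hcmp n).1) b F hG n) hc.le
    _ ≤ a + ∑ j ∈ Icc 1 k, (f j + g j / M₂) * x (n - j) := by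
        rw [mul_add, mul_sum]
        refine add_le_add (hc₂b c (min_le_right _ _) hc) (sum_le_sum fun j hj => ?_)
        rw [← mul_assoc]
        refine mul_le_mul_of_nonneg_right ?_ (hx _)
        exact (mul_le_mul_of_nonneg_right (min_le_left _ _)
          (add_nonneg (hF j) (div_nonneg (hG j) hM₁.le))).trans (hcoef j hj)
    _ ≤ lagSum k a f g x y n := le_lagSum hM₂ (fun n => (hcmp n).2) a f hg n

theorem lagSum_le_of_forall_le (hM₁ : 0 < M₁) (hyx : ∀ n, M₁ * y n ≤ x n) (α : ℝ)
    {β γ : ℕ → ℝ} (hβ : ∀ i, 0 ≤ β i) (hγ : ∀ i, 0 ≤ γ i) {t : ℕ} {Z : ℝ}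
    (hZ : ∀ j ∈ indexSet k β ∪ indexSet k γ, x (t - j) ≤ Z) :
    lagSum k α β γ x y t ≤ α + (∑ j ∈ Icc 1 k, (β j + γ j / M₁)) * Z :=
  (lagSum_le hM₁ hyx α β hγ t).trans <| add_le_add le_rfl <|
    sum_mul_le_sum_mul _ (fun j _ => add_nonneg (hβ j) (div_nonneg (hγ j) hM₁.le)) fun j hj h =>
      hZ j ((mem_indexSet_union_iff hβ hγ hM₁ hj).2 h)

theorem mul_le_lagSum (hM₂ : 0 < M₂) (hxy : ∀ n, x n ≤ M₂ * y n) (hx : ∀ n, 0 ≤ x n)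
    {a : ℝ} (ha : 0 ≤ a) {B C : ℕ → ℝ} (hB : ∀ i, 0 ≤ B i) (hC : ∀ i, 0 ≤ C i) {j : ℕ}
    (hj : j ∈ Icc 1 k) (t : ℕ) :
    (B j + C j / M₂) * x (t - j) ≤ lagSum k a B C x y t := by
  have := single_le_sum (f := fun j => (B j + C j / M₂) * x (t - j))
    (fun i _ => mul_nonneg (add_nonneg (hB i) (div_nonneg (hC i) hM₂.le)) (hx _)) hj
  linarith [le_lagSum (k := k) hM₂ hxy a B hC t]

theorem exists_pos_mul_le_lagSum (hM₂ : 0 < M₂) (hxy : ∀ n, x n ≤ M₂ * y n)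
    (hx : ∀ n, 0 ≤ x n) {a : ℝ} (ha : 0 ≤ a) {B C : ℕ → ℝ} (hB : ∀ i, 0 ≤ B i)
    (hC : ∀ i, 0 ≤ C i) (hT : (indexSet k B ∪ indexSet k C).Nonempty) :
    ∃ d > 0, ∀ t, ∀ j ∈ indexSet k B ∪ indexSet k C, d * x (t - j) ≤ lagSum k a B C x y t := by
  obtain ⟨j₀, hj₀, hmin⟩ := exists_min_image _ (fun j => B j + C j / M₂) hT
  refine ⟨_, (mem_indexSet_union_iff hB hC hM₂ (indexSet_union_subset_Icc k B C hj₀)).1 hj₀,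
    fun t j hj => ?_⟩
  exact (mul_le_mul_of_nonneg_right (hmin j hj) (hx _)).trans
    (mul_le_lagSum hM₂ hxy hx ha hB hC (indexSet_union_subset_Icc k B C hj) t)

end Recursion

theorem exists_eventually_le_of_pos_le {k η : ℕ} {α M₁ M₂ μ : ℝ} {β γ B C x y : ℕ → ℝ}
    (hM₁ : 0 < M₁) (hM₂ : 0 < M₂) (hβ : ∀ i, 0 ≤ β i) (hγ : ∀ i, 0 ≤ γ i)
    (hB : ∀ j, 0 ≤ B j) (hC : ∀ j, 0 ≤ C j) (hx : ∀ n, 0 ≤ x n)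
    (hcmp : ∀ n, M₁ * y n ≤ x n ∧ x n ≤ M₂ * y n) (hμ : 0 < μ) (hxμ : ∀ n, k ≤ n → μ ≤ x n)
    (hT : (indexSet k B ∪ indexSet k C).Nonempty)
    (hiter : iterCond η (indexSet k β ∪ indexSet k γ) (indexSet k B ∪ indexSet k C))
    (hden : ∀ n, k ≤ n → 0 < lagSum k 0 B C x y n)
    (hrec : ∀ n, k ≤ n → x n = lagSum k α β γ x y n / lagSum k 0 B C x y n) :
    ∃ Mx, ∃ N : ℕ, ∀ n, N < n → x n ≤ Mx := by
  have hyx n : M₁ * y n ≤ x n := (hcmp n).1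
  have hxy n : x n ≤ M₂ * y n := (hcmp n).2
  obtain ⟨d, hd, hdx⟩ := exists_pos_mul_le_lagSum hM₂ hxy hx le_rfl hB hC hT
  obtain ⟨j₀, hj₀⟩ := hT
  have hρ t (ht : 2 * k ≤ t) : d * μ ≤ lagSum k 0 B C x y t := by
    have := (mem_Icc.1 (indexSet_union_subset_Icc k B C hj₀)).2
    exact (mul_le_mul_of_nonneg_left (hxμ (t - j₀) (by omega)) hd.le).trans (hdx t j₀ hj₀)
  have hmul t (ht : k ≤ t) : x t * lagSum k 0 B C x y t = lagSum k α β γ x y t := by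
    rw [hrec t ht, div_mul_cancel₀ _ (hden t ht).ne']
  by_cases hS : (indexSet k β ∪ indexSet k γ).Nonempty
  · choose i hiS hmax using fun t => exists_max_image _ (fun j => x (t - j)) hS
    set e := ∑ j ∈ Icc 1 k, (β j + γ j / M₁)
    have he : 0 < e := by
      obtain ⟨j, hj⟩ := hS
      have hjk := indexSet_union_subset_Icc k β γ hj
      exact ((mem_indexSet_union_iff hβ hγ hM₁ hjk).1 hj).trans_le <|
        single_le_sum (fun j _ => add_nonneg (hβ j) (div_nonneg (hγ j) hM₁.le)) hjk
    have hnum t (ht : k ≤ t) : x t * lagSum k 0 B C x y t ≤ α + e * x (t - i t) :=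
      (hmul t ht).le.trans (lagSum_le_of_forall_le hM₁ hyx α hβ hγ (hmax t))
    obtain ⟨Mx, hMx⟩ := bddAbove_range_of_lag_inequalities (n₀ := 2 * k) (b := α)
      (indexSet_union_subset_Icc k β γ) hiter (mul_pos hd hμ) hd he i hiS
      (fun t ht => by
        nlinarith [mul_le_mul_of_nonneg_left (hρ t ht) (hx t), hnum t (by omega)])
      (fun t ht j hj => by
        nlinarith [mul_le_mul_of_nonneg_left (hdx t j hj) (hx t), hnum t (by omega)])
    exact ⟨Mx, 0, fun n _ => hMx ⟨n, rfl⟩⟩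
  · refine ⟨α / (d * μ), 2 * k, fun t ht => ?_⟩
    rw [le_div_iff₀ (mul_pos hd hμ)]
    have hnum := (hmul t (by omega)).le.trans
      (lagSum_le_of_forall_le (Z := 0) hM₁ hyx α hβ hγ fun j hj => absurd ⟨j, hj⟩ hS)
    nlinarith [mul_le_mul_of_nonneg_left (hρ t ht.le) (hx t)]

theorem stmt_2_general
    (k : ℕ)
    (α A p q : ℝ) (β γ B C δ ε D E : ℕ → ℝ)
    (hα : 0 ≤ α) (hp : 0 ≤ p)
    (hβ : ∀ i, 0 ≤ β i) (hγ : ∀ i, 0 ≤ γ i) (hB : ∀ j, 0 ≤ B j) (hC : ∀ j, 0 ≤ C j)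
    (hδ : ∀ i, 0 ≤ δ i) (hε : ∀ i, 0 ≤ ε i) (hD : ∀ j, 0 ≤ D j) (hE : ∀ j, 0 ≤ E j)
    (x y : ℕ → ℝ)
    (hxnn : ∀ n, 0 ≤ x n)
    (hxden : ∀ n, k ≤ n →
      0 < A + ∑ j ∈ Icc 1 k, B j * x (n - j) + ∑ j ∈ Icc 1 k, C j * y (n - j))
    (hyden : ∀ n, k ≤ n →
      0 < q + ∑ j ∈ Icc 1 k, D j * x (n - j) + ∑ j ∈ Icc 1 k, E j * y (n - j))
    (hxrec : ∀ n, k ≤ n → x n =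
      (α + ∑ i ∈ Icc 1 k, β i * x (n - i) + ∑ i ∈ Icc 1 k, γ i * y (n - i)) /
      (A + ∑ j ∈ Icc 1 k, B j * x (n - j) + ∑ j ∈ Icc 1 k, C j * y (n - j)))
    (hyrec : ∀ n, k ≤ n → y n =
      (p + ∑ i ∈ Icc 1 k, δ i * x (n - i) + ∑ i ∈ Icc 1 k, ε i * y (n - i)) /
      (q + ∑ j ∈ Icc 1 k, D j * x (n - j) + ∑ j ∈ Icc 1 k, E j * y (n - j)))
    (M1 M2 : ℝ) (hM1 : 0 < M1) (hM2 : 0 < M2)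
    (hcmp : ∀ n, M1 * y n ≤ x n ∧ x n ≤ M2 * y n)
    (hA0 : A = 0)
    (hcase :
      (indexSet k B ∪ indexSet k C ⊆ indexSet k β ∪ indexSet k γ ∧ indexSet k B ≠ ∅) ∨
      (q = 0 ∧ indexSet k D ∪ indexSet k E ⊆ indexSet k δ ∪ indexSet k ε ∧
        indexSet k C ≠ ∅) ∨
      (0 < p ∧ 0 < q ∧ indexSet k D ∪ indexSet k E ⊆ indexSet k δ ∪ indexSet k ε ∧
        indexSet k C ≠ ∅))
    (hη : ∃ η : ℕ, 0 < η ∧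
      iterCond η (indexSet k β ∪ indexSet k γ) (indexSet k B ∪ indexSet k C)) :
    ∃ M : ℝ, 0 < M ∧ ∃ N : ℕ, ∀ n, N < n → x n ≤ M ∧ y n ≤ M := by
  obtain ⟨η, -, hiter⟩ := hη
  subst hA0
  obtain ⟨μ, hμ, hxμ⟩ : ∃ μ > 0, ∀ n, k ≤ n → μ ≤ x n := by
    rcases hcase with ⟨hsub, -⟩ | hycase
    · exact exists_pos_le_of_indexSet_subset hM1 hM2 hxnn hcmp hα
        (fun h => (lt_irrefl 0 h).elim) hβ hγ hB hC hsub hxden hxrec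
    obtain ⟨hqp, hsub⟩ : (0 < q → 0 < p) ∧
        indexSet k D ∪ indexSet k E ⊆ indexSet k δ ∪ indexSet k ε := by
      rcases hycase with ⟨hq0, hsub, -⟩ | ⟨hp0, -, hsub, -⟩
      exacts [⟨fun h => absurd hq0 h.ne', hsub⟩, ⟨fun _ => hp0, hsub⟩]
    obtain ⟨c, hc, hyc⟩ :=
      exists_pos_le_of_indexSet_subset hM1 hM2 hxnn hcmp hp hqp hδ hε hD hE hsub hyden hyrec
    exact ⟨M1 * c, mul_pos hM1 hc, fun n hn =>
      (mul_le_mul_of_nonneg_left (hyc n hn) hM1.le).trans (hcmp n).1⟩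
  have hT : (indexSet k B ∪ indexSet k C).Nonempty := by
    rcases hcase with ⟨-, h⟩ | ⟨-, -, h⟩ | ⟨-, -, -, h⟩
    exacts [(nonempty_iff_ne_empty.2 h).mono subset_union_left,
      (nonempty_iff_ne_empty.2 h).mono subset_union_right,
      (nonempty_iff_ne_empty.2 h).mono subset_union_right]
  obtain ⟨Mx, N, hMx⟩ := exists_eventually_le_of_pos_le hM1 hM2 hβ hγ hB hC hxnn hcmp hμ hxμ
    hT hiter hxden hxrec
  refine ⟨|Mx| + |Mx| / M1 + 1, by positivity, N, fun n hn => ⟨?_, ?_⟩⟩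
  · linarith [hMx n hn, le_abs_self Mx, div_nonneg (abs_nonneg Mx) hM1.le]
  · have hy : y n ≤ |Mx| / M1 := by
      rw [le_div_iff₀ hM1]
      linarith [(hcmp n).1, hMx n hn, le_abs_self Mx]
    linarith [abs_nonneg Mx]

theorem stmt_2
    (k : ℕ) (hk : 0 < k)
    (α A p q : ℝ) (β γ B C δ ε D E : ℕ → ℝ)
    (hα : 0 ≤ α) (hA : 0 ≤ A) (hp : 0 ≤ p) (hq : 0 ≤ q)
    (hβ : ∀ i, 0 ≤ β i) (hγ : ∀ i, 0 ≤ γ i) (hB : ∀ j, 0 ≤ B j) (hC : ∀ j, 0 ≤ C j)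
    (hδ : ∀ i, 0 ≤ δ i) (hε : ∀ i, 0 ≤ ε i) (hD : ∀ j, 0 ≤ D j) (hE : ∀ j, 0 ≤ E j)
    (x y : ℕ → ℝ)
    (hxnn : ∀ n, 0 ≤ x n) (hynn : ∀ n, 0 ≤ y n)
    (hxden : ∀ n, k ≤ n →
      0 < A + ∑ j ∈ Icc 1 k, B j * x (n - j) + ∑ j ∈ Icc 1 k, C j * y (n - j))
    (hyden : ∀ n, k ≤ n →
      0 < q + ∑ j ∈ Icc 1 k, D j * x (n - j) + ∑ j ∈ Icc 1 k, E j * y (n - j))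
    (hxrec : ∀ n, k ≤ n → x n =
      (α + ∑ i ∈ Icc 1 k, β i * x (n - i) + ∑ i ∈ Icc 1 k, γ i * y (n - i)) /
      (A + ∑ j ∈ Icc 1 k, B j * x (n - j) + ∑ j ∈ Icc 1 k, C j * y (n - j)))
    (hyrec : ∀ n, k ≤ n → y n =
      (p + ∑ i ∈ Icc 1 k, δ i * x (n - i) + ∑ i ∈ Icc 1 k, ε i * y (n - i)) /
      (q + ∑ j ∈ Icc 1 k, D j * x (n - j) + ∑ j ∈ Icc 1 k, E j * y (n - j)))
    (M1 M2 : ℝ) (hM1 : 0 < M1) (hM2 : 0 < M2)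
    (hcmp : ∀ n, M1 * y n ≤ x n ∧ x n ≤ M2 * y n)
    (hA0 : A = 0)
    (hcase :
      (indexSet k B ∪ indexSet k C ⊆ indexSet k β ∪ indexSet k γ ∧ indexSet k B ≠ ∅) ∨
      (q = 0 ∧ indexSet k D ∪ indexSet k E ⊆ indexSet k δ ∪ indexSet k ε ∧
        indexSet k C ≠ ∅) ∨
      (0 < p ∧ 0 < q ∧ indexSet k D ∪ indexSet k E ⊆ indexSet k δ ∪ indexSet k ε ∧
        indexSet k C ≠ ∅))
    (hη : ∃ η : ℕ, 0 < η ∧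
      iterCond η (indexSet k β ∪ indexSet k γ) (indexSet k B ∪ indexSet k C)) :
    ∃ M : ℝ, 0 < M ∧ ∃ N : ℕ, ∀ n, N < n → x n ≤ M ∧ y n ≤ M :=
  stmt_2_general k α A p q β γ B C δ ε D E hα hp hβ hγ hB hC hδ hε hD hE x y hxnn hxden hyden hxrec
    hyrec M1 M2 hM1 hM2 hcmp hA0 hcase hη
end

section
/- Suppose that for the solution ({x_n},{y_n}) there exist constants M1, M2 > 0 such that M1·y_n ≤ x_n ≤ M2·y_n for all n ∈ ℕ. Suppose q = 0, p = 0, and I_δ ∪ I_ε ⊆ I_D ∪ I_E. Then there exist M > 0 and N ∈ ℕ such that x_n ≤ M and y_n ≤ M for all n > N. -/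
open Finset

theorem stmt_4
    (k : ℕ) (hk : 0 < k)
    (α A p q : ℝ) (β γ B C δ ε D E : ℕ → ℝ)
    (hα : 0 ≤ α) (hA : 0 ≤ A) (hp : 0 ≤ p) (hq : 0 ≤ q)
    (hβ : ∀ i, 0 ≤ β i) (hγ : ∀ i, 0 ≤ γ i) (hB : ∀ j, 0 ≤ B j) (hC : ∀ j, 0 ≤ C j)
    (hδ : ∀ i, 0 ≤ δ i) (hε : ∀ i, 0 ≤ ε i) (hD : ∀ j, 0 ≤ D j) (hE : ∀ j, 0 ≤ E j)
    (x y : ℕ → ℝ)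
    (hxnn : ∀ n, 0 ≤ x n) (hynn : ∀ n, 0 ≤ y n)
    (hxden : ∀ n, k ≤ n →
      0 < A + ∑ j ∈ Icc 1 k, B j * x (n - j) + ∑ j ∈ Icc 1 k, C j * y (n - j))
    (hyden : ∀ n, k ≤ n →
      0 < q + ∑ j ∈ Icc 1 k, D j * x (n - j) + ∑ j ∈ Icc 1 k, E j * y (n - j))
    (hxrec : ∀ n, k ≤ n → x n =
      (α + ∑ i ∈ Icc 1 k, β i * x (n - i) + ∑ i ∈ Icc 1 k, γ i * y (n - i)) /
      (A + ∑ j ∈ Icc 1 k, B j * x (n - j) + ∑ j ∈ Icc 1 k, C j * y (n - j)))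
    (hyrec : ∀ n, k ≤ n → y n =
      (p + ∑ i ∈ Icc 1 k, δ i * x (n - i) + ∑ i ∈ Icc 1 k, ε i * y (n - i)) /
      (q + ∑ j ∈ Icc 1 k, D j * x (n - j) + ∑ j ∈ Icc 1 k, E j * y (n - j)))
    (M1 M2 : ℝ) (hM1 : 0 < M1) (hM2 : 0 < M2)
    (hcmp : ∀ n, M1 * y n ≤ x n ∧ x n ≤ M2 * y n)
    (hq0 : q = 0) (hp0 : p = 0)
    (hsub : indexSet k δ ∪ indexSet k ε ⊆ indexSet k D ∪ indexSet k E) :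
    ∃ M : ℝ, 0 < M ∧ ∃ N : ℕ, ∀ n, N < n → x n ≤ M ∧ y n ≤ M := by

  have hne : (Finset.Icc 1 k).Nonempty := ⟨1, Finset.mem_Icc.mpr ⟨le_refl 1, hk⟩⟩
  set C₀ : ℝ := ((Finset.Icc 1 k).sup' hne
      (fun i => (δ i * M2 + ε i) / (D i * M1 + E i))) ⊔ 0 with hC₀
  have hC0 : 0 ≤ C₀ := le_max_right _ _
  have key : ∀ i ∈ Finset.Icc 1 k,
      δ i * M2 + ε i ≤ C₀ * (D i * M1 + E i) := by
    intro i hi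
    have hbnn : 0 ≤ D i * M1 + E i := by
      have := hD i; have := hE i; nlinarith
    have hann : 0 ≤ δ i * M2 + ε i := by
      have := hδ i; have := hε i; nlinarith
    rcases eq_or_lt_of_le hann with h | h
    · rw [← h]; exact mul_nonneg hC0 hbnn
    · have hmem : i ∈ indexSet k δ ∪ indexSet k ε := by
        by_contra hcon
        simp only [indexSet, Finset.mem_union, Finset.mem_filter, not_or, not_and,
          not_lt] at hcon
        have h1 : δ i ≤ 0 := hcon.1 hi
        have h2 : ε i ≤ 0 := hcon.2 hi
        nlinarith
      have hbpos : 0 < D i * M1 + E i := by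
        rcases Finset.mem_union.mp (hsub hmem) with h' | h' <;>
          simp only [indexSet, Finset.mem_filter] at h'
        · nlinarith [hE i]
        · nlinarith [hD i]
      have hle : (δ i * M2 + ε i) / (D i * M1 + E i) ≤ C₀ :=
        le_trans (Finset.le_sup' (fun i => (δ i * M2 + ε i) / (D i * M1 + E i)) hi)
          (le_max_left _ _)
      calc δ i * M2 + ε i = (δ i * M2 + ε i) / (D i * M1 + E i) * (D i * M1 + E i) := by
            field_simp
        _ ≤ C₀ * (D i * M1 + E i) := mul_le_mul_of_nonneg_right hle hbnn
  have hyb : ∀ n, k ≤ n → y n ≤ C₀ := by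
    intro n hn
    have hden := hyden n hn
    rw [hq0] at hden
    rw [hyrec n hn, hp0, hq0, div_le_iff₀ hden]
    have step : ∀ i ∈ Finset.Icc 1 k,
        δ i * x (n - i) + ε i * y (n - i) ≤ C₀ * (D i * x (n - i) + E i * y (n - i)) := by
      intro i hi
      have h1 := (hcmp (n - i)).1
      have h2 := (hcmp (n - i)).2
      have hki := key i hi
      have hy := hynn (n - i)
      nlinarith [mul_nonneg (hδ i) (sub_nonneg.2 h2),
        mul_nonneg (sub_nonneg.2 hki) hy,
        mul_nonneg (mul_nonneg hC0 (hD i)) (sub_nonneg.2 h1)]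
    calc 0 + ∑ i ∈ Finset.Icc 1 k, δ i * x (n - i) + ∑ i ∈ Finset.Icc 1 k, ε i * y (n - i)
        = ∑ i ∈ Finset.Icc 1 k, (δ i * x (n - i) + ε i * y (n - i)) := by
          rw [Finset.sum_add_distrib]; ring
      _ ≤ ∑ i ∈ Finset.Icc 1 k, C₀ * (D i * x (n - i) + E i * y (n - i)) :=
          Finset.sum_le_sum step
      _ = C₀ * (0 + ∑ j ∈ Finset.Icc 1 k, D j * x (n - j)
            + ∑ j ∈ Finset.Icc 1 k, E j * y (n - j)) := by
          rw [← Finset.mul_sum, Finset.sum_add_distrib]; ring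
  refine ⟨(1 + M2) * (C₀ + 1), by nlinarith, k, fun n hn => ?_⟩
  have hyn := hyb n hn.le
  have hx := (hcmp n).2
  have hy := hynn n
  constructor <;> nlinarith
end

section
/- Suppose that for the solution ({x_n},{y_n}) there exist constants M1, M2 > 0 such that M1·y_n ≤ x_n ≤ M2·y_n for all n ∈ ℕ. Suppose A = 0, α = 0, and I_β ∪ I_γ ⊆ I_B ∪ I_C. Then there exist M > 0 and N ∈ ℕ such that x_n ≤ M and y_n ≤ M for all n > N. -/
/-!
Bound everything in terms of `y`: since `M₁ y ≤ x ≤ M₂ y`, each numerator term satisfies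
`βᵢ x + γᵢ y ≤ (M₂ βᵢ + γᵢ) y` and each denominator term `Bᵢ x + Cᵢ y ≥ (M₁ Bᵢ + Cᵢ) y`.
The inclusion `I_β ∪ I_γ ⊆ I_B ∪ I_C` says the first coefficient vanishes wherever the second does,
so a single constant `K` dominates their ratios, giving `xₙ ≤ K` and then `yₙ ≤ K / M₁`.
-/

open Finset

theorem Finset.exists_pos_forall_le_mul {ι : Type*} (s : Finset ι) {f g : ι → ℝ}
    (hg : ∀ i ∈ s, 0 ≤ g i) (hfg : ∀ i ∈ s, g i = 0 → f i ≤ 0) :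
    ∃ K, 0 < K ∧ ∀ i ∈ s, f i ≤ K * g i := by
  refine ⟨1 + ∑ j ∈ s, |f j / g j|, by positivity, fun i hi => ?_⟩
  rcases (hg i hi).eq_or_lt with hzero | hpos
  · rw [← hzero, mul_zero]
    exact hfg i hi hzero.symm
  · have hle : |f i / g i| ≤ ∑ j ∈ s, |f j / g j| :=
      single_le_sum (f := fun j => |f j / g j|) (fun j _ => abs_nonneg _) hi
    calc f i = f i / g i * g i := (div_mul_cancel₀ _ hpos.ne').symm
      _ ≤ |f i / g i| * g i := by gcongr; exact le_abs_self _
      _ ≤ (1 + ∑ j ∈ s, |f j / g j|) * g i := by gcongr; linarith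

theorem eq_zero_of_notMem_indexSet {k i : ℕ} {f : ℕ → ℝ} (hf : 0 ≤ f i) (hi : i ∈ Icc 1 k)
    (hnot : i ∉ indexSet k f) : f i = 0 := by
  simp only [indexSet, mem_filter, not_and, not_lt] at hnot
  exact le_antisymm (hnot hi) hf

theorem exists_pos_coeff_le_mul {k : ℕ} {β γ B C : ℕ → ℝ}
    (hβ : ∀ i, 0 ≤ β i) (hγ : ∀ i, 0 ≤ γ i) (hB : ∀ j, 0 ≤ B j) (hC : ∀ j, 0 ≤ C j)
    {M1 : ℝ} (hM1 : 0 < M1) (M2 : ℝ)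
    (hsub : indexSet k β ∪ indexSet k γ ⊆ indexSet k B ∪ indexSet k C) :
    ∃ K, 0 < K ∧ ∀ i ∈ Icc 1 k, M2 * β i + γ i ≤ K * (M1 * B i + C i) := by
  refine exists_pos_forall_le_mul _ (fun i _ => add_nonneg (mul_nonneg hM1.le (hB i)) (hC i))
    fun i hi hzero => ?_
  obtain ⟨hBi, hCi⟩ := (add_eq_zero_iff_of_nonneg (mul_nonneg hM1.le (hB i)) (hC i)).mp hzero
  have hBC : i ∉ indexSet k B ∪ indexSet k C := by
    simp [indexSet, (mul_eq_zero.mp hBi).resolve_left hM1.ne', hCi]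
  obtain ⟨hiβ, hiγ⟩ := not_or.mp fun h => hBC (hsub (mem_union.mpr h))
  simp [eq_zero_of_notMem_indexSet (hβ i) hi hiβ, eq_zero_of_notMem_indexSet (hγ i) hi hiγ]

theorem mul_add_mul_le_mul_of_comparable {b c B C u v M1 M2 K : ℝ}
    (hb : 0 ≤ b) (hB : 0 ≤ B) (hv : 0 ≤ v) (hK : 0 ≤ K)
    (hlow : M1 * v ≤ u) (hup : u ≤ M2 * v) (hcoef : M2 * b + c ≤ K * (M1 * B + C)) :
    b * u + c * v ≤ K * (B * u + C * v) :=
  calc b * u + c * v ≤ b * (M2 * v) + c * v := by gcongr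
    _ = (M2 * b + c) * v := by ring
    _ ≤ K * (M1 * B + C) * v := by gcongr
    _ = K * (B * (M1 * v) + C * v) := by ring
    _ ≤ K * (B * u + C * v) := by gcongr

theorem sum_div_sum_le_of_comparable {ι : Type*} (s : Finset ι) {β γ B C u v : ι → ℝ}
    {M1 M2 K : ℝ} (hβ : ∀ i, 0 ≤ β i) (hB : ∀ i, 0 ≤ B i) (hC : ∀ i, 0 ≤ C i)
    (hu : ∀ i, 0 ≤ u i) (hv : ∀ i, 0 ≤ v i) (hK : 0 ≤ K)
    (hcmp : ∀ i, M1 * v i ≤ u i ∧ u i ≤ M2 * v i)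
    (hcoef : ∀ i ∈ s, M2 * β i + γ i ≤ K * (M1 * B i + C i)) :
    (∑ i ∈ s, β i * u i + ∑ i ∈ s, γ i * v i) /
      (∑ i ∈ s, B i * u i + ∑ i ∈ s, C i * v i) ≤ K := by
  have hden : 0 ≤ ∑ i ∈ s, B i * u i + ∑ i ∈ s, C i * v i :=
    add_nonneg (sum_nonneg fun i _ => mul_nonneg (hB i) (hu i))
      (sum_nonneg fun i _ => mul_nonneg (hC i) (hv i))
  refine div_le_of_le_mul₀ hden hK ?_
  rw [← sum_add_distrib, ← sum_add_distrib, mul_sum]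
  exact sum_le_sum fun i hi => mul_add_mul_le_mul_of_comparable (hβ i) (hB i) (hv i) hK
    (hcmp i).1 (hcmp i).2 (hcoef i hi)

theorem stmt_5_general
    (k : ℕ)
    (α A : ℝ) (β γ B C : ℕ → ℝ)
    (hβ : ∀ i, 0 ≤ β i) (hγ : ∀ i, 0 ≤ γ i) (hB : ∀ j, 0 ≤ B j) (hC : ∀ j, 0 ≤ C j)
    (x y : ℕ → ℝ)
    (hxnn : ∀ n, 0 ≤ x n) (hynn : ∀ n, 0 ≤ y n)
    (hxrec : ∀ n, k ≤ n → x n =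
      (α + ∑ i ∈ Icc 1 k, β i * x (n - i) + ∑ i ∈ Icc 1 k, γ i * y (n - i)) /
      (A + ∑ j ∈ Icc 1 k, B j * x (n - j) + ∑ j ∈ Icc 1 k, C j * y (n - j)))
    (M1 M2 : ℝ) (hM1 : 0 < M1)
    (hcmp : ∀ n, M1 * y n ≤ x n ∧ x n ≤ M2 * y n)
    (hA0 : A = 0) (hα0 : α = 0)
    (hsub : indexSet k β ∪ indexSet k γ ⊆ indexSet k B ∪ indexSet k C) :
    ∃ M : ℝ, 0 < M ∧ ∃ N : ℕ, ∀ n, N < n → x n ≤ M ∧ y n ≤ M := by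
  obtain ⟨K, hK, hcoef⟩ := exists_pos_coeff_le_mul hβ hγ hB hC hM1 M2 hsub
  have hxK : ∀ n, k ≤ n → x n ≤ K := fun n hn => by
    rw [hxrec n hn, hα0, hA0, zero_add, zero_add]
    exact sum_div_sum_le_of_comparable _ hβ hB hC (fun _ => hxnn _) (fun _ => hynn _) hK.le
      (fun _ => hcmp _) hcoef
  refine ⟨K + K / M1, by positivity, k, fun n hn => ?_⟩
  have hx : x n ≤ K := hxK n hn.le
  have hy : y n ≤ K / M1 := by
    rw [le_div_iff₀ hM1]
    linarith [(hcmp n).1]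
  have hKM1 : 0 < K / M1 := by positivity
  exact ⟨by linarith, by linarith⟩

theorem stmt_5
    (k : ℕ) (hk : 0 < k)
    (α A p q : ℝ) (β γ B C δ ε D E : ℕ → ℝ)
    (hα : 0 ≤ α) (hA : 0 ≤ A) (hp : 0 ≤ p) (hq : 0 ≤ q)
    (hβ : ∀ i, 0 ≤ β i) (hγ : ∀ i, 0 ≤ γ i) (hB : ∀ j, 0 ≤ B j) (hC : ∀ j, 0 ≤ C j)
    (hδ : ∀ i, 0 ≤ δ i) (hε : ∀ i, 0 ≤ ε i) (hD : ∀ j, 0 ≤ D j) (hE : ∀ j, 0 ≤ E j)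
    (x y : ℕ → ℝ)
    (hxnn : ∀ n, 0 ≤ x n) (hynn : ∀ n, 0 ≤ y n)
    (hxden : ∀ n, k ≤ n →
      0 < A + ∑ j ∈ Icc 1 k, B j * x (n - j) + ∑ j ∈ Icc 1 k, C j * y (n - j))
    (hyden : ∀ n, k ≤ n →
      0 < q + ∑ j ∈ Icc 1 k, D j * x (n - j) + ∑ j ∈ Icc 1 k, E j * y (n - j))
    (hxrec : ∀ n, k ≤ n → x n =
      (α + ∑ i ∈ Icc 1 k, β i * x (n - i) + ∑ i ∈ Icc 1 k, γ i * y (n - i)) /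
      (A + ∑ j ∈ Icc 1 k, B j * x (n - j) + ∑ j ∈ Icc 1 k, C j * y (n - j)))
    (hyrec : ∀ n, k ≤ n → y n =
      (p + ∑ i ∈ Icc 1 k, δ i * x (n - i) + ∑ i ∈ Icc 1 k, ε i * y (n - i)) /
      (q + ∑ j ∈ Icc 1 k, D j * x (n - j) + ∑ j ∈ Icc 1 k, E j * y (n - j)))
    (M1 M2 : ℝ) (hM1 : 0 < M1) (hM2 : 0 < M2)
    (hcmp : ∀ n, M1 * y n ≤ x n ∧ x n ≤ M2 * y n)
    (hA0 : A = 0) (hα0 : α = 0)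
    (hsub : indexSet k β ∪ indexSet k γ ⊆ indexSet k B ∪ indexSet k C) :
    ∃ M : ℝ, 0 < M ∧ ∃ N : ℕ, ∀ n, N < n → x n ≤ M ∧ y n ≤ M :=
  stmt_5_general k α A β γ B C hβ hγ hB hC x y hxnn hynn hxrec M1 M2 hM1 hcmp hA0 hα0 hsub
end

section
/- Suppose A > 0, I_γ ⊆ I_C, and that there exists a positive integer η such that for every sequence {c_m}_{m=1}^∞ with c_m ∈ I_β for all m, there exist positive integers N1 ≤ N2 ≤ η with Σ_{m=N1}^{N2} c_m ∈ I_B. Then there exist M > 0 and N ∈ ℕ such that x_n ≤ M for all n > N. -/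
open Finset

/-- Recursive bound sequence used in the boundedness proof. -/
noncomputable def bdAux (a b : ℝ) (kk : ℕ) : ℕ → ℝ
  | 0 => 0
  | r + 1 => a + kk * (bdAux a b kk r + b)

lemma bdAux_nonneg {a b : ℝ} (ha : 0 ≤ a) (hb : 0 ≤ b) (kk : ℕ) :
    ∀ r, 0 ≤ bdAux a b kk r
  | 0 => le_refl 0
  | r + 1 => by
      have h := bdAux_nonneg ha hb kk r
      have hkk : (0:ℝ) ≤ (kk : ℝ) := Nat.cast_nonneg _
      show 0 ≤ a + kk * (bdAux a b kk r + b)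
      nlinarith

lemma icc_succ_left_eq_ioc (a b : ℕ) : Finset.Icc (a+1) b = Finset.Ioc a b := by
  ext z; simp only [Finset.mem_Icc, Finset.mem_Ioc]; omega

theorem stmt_6
    (k : ℕ) (hk : 0 < k)
    (α A p q : ℝ) (β γ B C δ ε D E : ℕ → ℝ)
    (hα : 0 ≤ α) (hA : 0 ≤ A) (hp : 0 ≤ p) (hq : 0 ≤ q)
    (hβ : ∀ i, 0 ≤ β i) (hγ : ∀ i, 0 ≤ γ i) (hB : ∀ j, 0 ≤ B j) (hC : ∀ j, 0 ≤ C j)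
    (hδ : ∀ i, 0 ≤ δ i) (hε : ∀ i, 0 ≤ ε i) (hD : ∀ j, 0 ≤ D j) (hE : ∀ j, 0 ≤ E j)
    (x y : ℕ → ℝ)
    (hxnn : ∀ n, 0 ≤ x n) (hynn : ∀ n, 0 ≤ y n)
    (hxden : ∀ n, k ≤ n →
      0 < A + ∑ j ∈ Icc 1 k, B j * x (n - j) + ∑ j ∈ Icc 1 k, C j * y (n - j))
    (hyden : ∀ n, k ≤ n →
      0 < q + ∑ j ∈ Icc 1 k, D j * x (n - j) + ∑ j ∈ Icc 1 k, E j * y (n - j))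
    (hxrec : ∀ n, k ≤ n → x n =
      (α + ∑ i ∈ Icc 1 k, β i * x (n - i) + ∑ i ∈ Icc 1 k, γ i * y (n - i)) /
      (A + ∑ j ∈ Icc 1 k, B j * x (n - j) + ∑ j ∈ Icc 1 k, C j * y (n - j)))
    (hyrec : ∀ n, k ≤ n → y n =
      (p + ∑ i ∈ Icc 1 k, δ i * x (n - i) + ∑ i ∈ Icc 1 k, ε i * y (n - i)) /
      (q + ∑ j ∈ Icc 1 k, D j * x (n - j) + ∑ j ∈ Icc 1 k, E j * y (n - j)))
    (hApos : 0 < A)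
    (hsub : indexSet k γ ⊆ indexSet k C)
    (hη : ∃ η : ℕ, 0 < η ∧ iterCond η (indexSet k β) (indexSet k B)) :
    ∃ M : ℝ, 0 < M ∧ ∃ N : ℕ, ∀ n, N < n → x n ≤ M := by
  classical
  obtain ⟨η, hηpos, hiter⟩ := hη
  -- the denominator of the x-recursion
  set den : ℕ → ℝ := fun n =>
    A + ∑ j ∈ Icc 1 k, B j * x (n - j) + ∑ j ∈ Icc 1 k, C j * y (n - j) with hden_def
  have hden_eq : ∀ n, den n =
      A + ∑ j ∈ Icc 1 k, B j * x (n - j) + ∑ j ∈ Icc 1 k, C j * y (n - j) := fun n => rfl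
  -- chain sums and weights
  set Sl : (ℕ → ℕ) → ℕ → ℕ := fun c m => ∑ j ∈ Icc 1 m, c j with hSl_def
  have hSl_eq : ∀ c m, Sl c m = ∑ j ∈ Icc 1 m, c j := fun c m => rfl
  set W : (ℕ → ℕ) → ℕ → ℕ → ℝ := fun c t n0 =>
    ∏ m ∈ Icc 1 t, β (c m) / den (n0 - Sl c (m - 1)) with hW_def
  have hW_eq : ∀ c t n0, W c t n0 =
      ∏ m ∈ Icc 1 t, β (c m) / den (n0 - Sl c (m - 1)) := fun c t n0 => rfl
  -- constants
  set L : ℝ := α / A + ∑ i ∈ indexSet k γ, γ i / C i with hL_def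
  set G : ℝ := 1 + (∑ i ∈ Icc 1 k, β i) / A with hG_def
  set CB : ℝ := ∑ j ∈ indexSet k B, A * G / B j with hCB_def
  set a : ℝ := G ^ η * L with ha_def
  set b : ℝ := G ^ η * CB with hb_def
  clear_value den Sl W L G CB a b
  have hdenA : ∀ n, A ≤ den n := by
    intro n
    have h1 : 0 ≤ ∑ j ∈ Icc 1 k, B j * x (n - j) :=
      Finset.sum_nonneg fun j _ => mul_nonneg (hB j) (hxnn _)
    have h2 : 0 ≤ ∑ j ∈ Icc 1 k, C j * y (n - j) :=
      Finset.sum_nonneg fun j _ => mul_nonneg (hC j) (hynn _)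
    rw [hden_eq]; linarith
  have hden_pos : ∀ n, 0 < den n := fun n => lt_of_lt_of_le hApos (hdenA n)
  have hdenB : ∀ n s, s ∈ Icc 1 k → B s * x (n - s) ≤ den n := by
    intro n s hs
    have h1 : B s * x (n - s) ≤ ∑ j ∈ Icc 1 k, B j * x (n - j) :=
      Finset.single_le_sum (f := fun j => B j * x (n - j))
        (fun j _ => mul_nonneg (hB j) (hxnn _)) hs
    have h2 : 0 ≤ ∑ j ∈ Icc 1 k, C j * y (n - j) :=
      Finset.sum_nonneg fun j _ => mul_nonneg (hC j) (hynn _)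
    rw [hden_eq]; linarith
  have hdenC : ∀ n s, s ∈ Icc 1 k → C s * y (n - s) ≤ den n := by
    intro n s hs
    have h1 : C s * y (n - s) ≤ ∑ j ∈ Icc 1 k, C j * y (n - j) :=
      Finset.single_le_sum (f := fun j => C j * y (n - j))
        (fun j _ => mul_nonneg (hC j) (hynn _)) hs
    have h2 : 0 ≤ ∑ j ∈ Icc 1 k, B j * x (n - j) :=
      Finset.sum_nonneg fun j _ => mul_nonneg (hB j) (hxnn _)
    rw [hden_eq]; linarith
  have hLnn : 0 ≤ L := by
    rw [hL_def]
    apply add_nonneg (div_nonneg hα hA)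
    exact Finset.sum_nonneg fun i _ => div_nonneg (hγ i) (hC i)
  have hG1 : 1 ≤ G := by
    have : 0 ≤ (∑ i ∈ Icc 1 k, β i) / A :=
      div_nonneg (Finset.sum_nonneg fun i _ => hβ i) hA
    rw [hG_def]; linarith
  have hG0 : 0 ≤ G := le_trans zero_le_one hG1
  have hGβ : ∀ i, i ∈ Icc 1 k → β i / A ≤ G := by
    intro i hi
    have h1 : β i ≤ ∑ j ∈ Icc 1 k, β j :=
      Finset.single_le_sum (f := fun j => β j) (fun j _ => hβ j) hi
    have h2 : β i / A ≤ (∑ j ∈ Icc 1 k, β j) / A :=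
      div_le_div_of_nonneg_right h1 hApos.le
    rw [hG_def]; linarith
  have hβAG : ∀ i, i ∈ Icc 1 k → β i ≤ A * G := by
    intro i hi
    have := hGβ i hi
    rw [div_le_iff₀ hApos] at this
    linarith [this]
  have hCBnn : 0 ≤ CB := by
    rw [hCB_def]
    exact Finset.sum_nonneg fun j _ => div_nonneg (mul_nonneg hA hG0) (hB j)
  have hann : 0 ≤ a := ha_def ▸ mul_nonneg (pow_nonneg hG0 _) hLnn
  have hbnn : 0 ≤ b := hb_def ▸ mul_nonneg (pow_nonneg hG0 _) hCBnn
  -- every free chain has length < η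
  have hfree_lt : ∀ (c : ℕ → ℕ) (t : ℕ), (∀ m, 1 ≤ m → m ≤ t → c m ∈ indexSet k β) →
      (∀ N1 N2, 0 < N1 → N1 ≤ N2 → N2 ≤ t → (∑ m ∈ Icc N1 N2, c m) ∉ indexSet k B) →
      t < η := by
    intro c t hmem hfr
    by_contra hcon
    push_neg at hcon
    have h1t : 1 ≤ t := le_trans hηpos hcon
    obtain ⟨N1, N2, hN1, hN12, hN2η, hsum⟩ :=
      hiter (fun m => if m ≤ t then c m else c 1) (by
        intro m hm
        by_cases hmt : m ≤ t
        · simp only [if_pos hmt]; exact hmem m hm hmt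
        · simp only [if_neg hmt]; exact hmem 1 le_rfl h1t)
    have hN2t : N2 ≤ t := le_trans hN2η hcon
    have heq : (∑ m ∈ Icc N1 N2, if m ≤ t then c m else c 1) = ∑ m ∈ Icc N1 N2, c m := by
      apply Finset.sum_congr rfl
      intro m hm
      exact if_pos (le_trans (Finset.mem_Icc.mp hm).2 hN2t)
    rw [heq] at hsum
    exact hfr N1 N2 hN1 hN12 hN2t hsum
  -- the main induction
  have main : ∀ r t, t + r = η →
      ∀ c : ℕ → ℕ, (∀ m, 1 ≤ m → m ≤ t → c m ∈ indexSet k β) →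
      (∀ N1 N2, 0 < N1 → N1 ≤ N2 → N2 ≤ t → (∑ m ∈ Icc N1 N2, c m) ∉ indexSet k B) →
      ∀ n0, k * η + k ≤ n0 → W c t n0 * x (n0 - Sl c t) ≤ bdAux a b k r := by
    intro r
    induction r with
    | zero =>
      intro t ht c hmem hfr n0 hn0
      have := hfree_lt c t hmem hfr
      omega
    | succ r ih =>
      intro t ht c hmem hfr n0 hn0
      set nt := n0 - Sl c t with hnt_def
      have hcIcc : ∀ m, 1 ≤ m → m ≤ t → c m ∈ Icc 1 k := fun m h1 h2 =>
        Finset.filter_subset _ _ (hmem m h1 h2)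
      have hSl_le : Sl c t ≤ k * t := by
        rw [hSl_eq]
        have h1 : (∑ j ∈ Icc 1 t, c j) ≤ ∑ _j ∈ Icc 1 t, k := by
          apply Finset.sum_le_sum
          intro m hm
          have hm' := Finset.mem_Icc.mp hm
          exact (Finset.mem_Icc.mp (hcIcc m hm'.1 hm'.2)).2
        simpa [Nat.card_Icc, mul_comm] using h1
      have hk_nt : k ≤ nt := by
        have htη : t ≤ η := by omega
        have h2 : Sl c t + k ≤ n0 := by
          have h3 : k * t + k ≤ k * η + k := by
            have := Nat.mul_le_mul_left k htη; omega
          omega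
        omega
      have hden_ne : den nt ≠ 0 := ne_of_gt (hden_pos nt)
      have hW_nonneg : 0 ≤ W c t n0 := by
        rw [hW_eq]
        apply Finset.prod_nonneg
        intro m _
        exact div_nonneg (hβ _) (hden_pos _).le
      have hW_le : W c t n0 ≤ G ^ η := by
        rw [hW_eq]
        have h1 : (∏ m ∈ Icc 1 t, β (c m) / den (n0 - Sl c (m - 1)))
            ≤ ∏ _m ∈ Icc 1 t, G := by
          apply Finset.prod_le_prod
          · intro m _; exact div_nonneg (hβ _) (hden_pos _).le
          · intro m hm
            have hm' := Finset.mem_Icc.mp hm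
            calc β (c m) / den (n0 - Sl c (m - 1))
                ≤ β (c m) / A := div_le_div_of_nonneg_left (hβ _) hApos (hdenA _)
              _ ≤ G := hGβ _ (hcIcc m hm'.1 hm'.2)
        rw [Finset.prod_const, Nat.card_Icc] at h1
        calc (∏ m ∈ Icc 1 t, β (c m) / den (n0 - Sl c (m - 1)))
            ≤ G ^ (t + 1 - 1) := h1
          _ ≤ G ^ η := pow_le_pow_right₀ hG1 (by omega)
      -- step inequality
      have key2 : ∑ i ∈ Icc 1 k, β i * x (nt - i)
          = ∑ i ∈ indexSet k β, β i * x (nt - i) := by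
        symm
        apply Finset.sum_subset (Finset.filter_subset _ _)
        intro i hi hni
        have hβ0 : β i = 0 := by
          by_contra h
          exact hni (Finset.mem_filter.mpr ⟨hi, lt_of_le_of_ne (hβ i) (Ne.symm h)⟩)
        rw [hβ0, zero_mul]
      have key1 : α + ∑ i ∈ Icc 1 k, γ i * y (nt - i) ≤ L * den nt := by
        have hα' : α ≤ α / A * den nt := by
          have h1 : α / A * A ≤ α / A * den nt :=
            mul_le_mul_of_nonneg_left (hdenA nt) (div_nonneg hα hA)
          rw [div_mul_cancel₀ _ (ne_of_gt hApos)] at h1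
          exact h1
        have hγsum : ∑ i ∈ Icc 1 k, γ i * y (nt - i)
            = ∑ i ∈ indexSet k γ, γ i * y (nt - i) := by
          symm
          apply Finset.sum_subset (Finset.filter_subset _ _)
          intro i hi hni
          have hγ0 : γ i = 0 := by
            by_contra h
            exact hni (Finset.mem_filter.mpr ⟨hi, lt_of_le_of_ne (hγ i) (Ne.symm h)⟩)
          rw [hγ0, zero_mul]
        have hterm : ∀ i ∈ indexSet k γ, γ i * y (nt - i) ≤ γ i / C i * den nt := by
          intro i hi
          have hiC : i ∈ indexSet k C := hsub hi
          have hCpos : 0 < C i := (Finset.mem_filter.mp hiC).2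
          have hiIcc : i ∈ Icc 1 k := Finset.filter_subset _ _ hi
          have h1 : C i * y (nt - i) ≤ den nt := hdenC nt i hiIcc
          have h2 : γ i / C i * (C i * y (nt - i)) ≤ γ i / C i * den nt :=
            mul_le_mul_of_nonneg_left h1 (div_nonneg (hγ i) hCpos.le)
          have h3 : γ i / C i * (C i * y (nt - i)) = γ i * y (nt - i) := by
            field_simp
          rw [h3] at h2
          exact h2
        have h4 : ∑ i ∈ indexSet k γ, γ i * y (nt - i)
            ≤ ∑ i ∈ indexSet k γ, γ i / C i * den nt := Finset.sum_le_sum hterm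
        rw [hL_def, add_mul, Finset.sum_mul, hγsum]
        exact add_le_add hα' h4
      have hx_step : x nt ≤ L + ∑ i ∈ indexSet k β, β i * x (nt - i) / den nt := by
        rw [hxrec nt hk_nt, div_le_iff₀ (hxden nt hk_nt)]
        have hEq : (L + ∑ i ∈ indexSet k β, β i * x (nt - i) / den nt) *
            (A + ∑ j ∈ Icc 1 k, B j * x (nt - j) + ∑ j ∈ Icc 1 k, C j * y (nt - j))
            = L * den nt + ∑ i ∈ indexSet k β, β i * x (nt - i) := by
          rw [← hden_eq, add_mul, Finset.sum_mul]
          congr 1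
          apply Finset.sum_congr rfl
          intro i _
          rw [div_mul_cancel₀ _ hden_ne]
        rw [hEq, key2]
        linarith [key1]
      -- the per-term bound
      have hterm : ∀ i ∈ indexSet k β,
          W c t n0 * (β i * x (nt - i) / den nt) ≤ bdAux a b k r + b := by
        intro i hi
        set c' : ℕ → ℕ := Function.update c (t + 1) i with hc'_def
        have hcp : ∀ m, m ≤ t → c' m = c m := fun m hm =>
          Function.update_of_ne (by omega) _ _
        have hct1 : c' (t + 1) = i := Function.update_self _ _ _
        have hSl' : ∀ m, m ≤ t → Sl c' m = Sl c m := by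
          intro m hm
          rw [hSl_eq, hSl_eq]
          apply Finset.sum_congr rfl
          intro j hj
          exact hcp j (le_trans (Finset.mem_Icc.mp hj).2 hm)
        have hSlt1 : Sl c' (t + 1) = Sl c t + i := by
          rw [hSl_eq, hSl_eq]
          rw [Finset.sum_Icc_succ_top (by omega : 1 ≤ t + 1), hct1]
          congr 1
          apply Finset.sum_congr rfl
          intro j hj
          exact hcp j (Finset.mem_Icc.mp hj).2
        have hW' : W c' (t + 1) n0 = W c t n0 * (β i / den nt) := by
          rw [hW_eq, hW_eq]
          rw [Finset.prod_Icc_succ_top (by omega : 1 ≤ t + 1)]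
          congr 1
          · apply Finset.prod_congr rfl
            intro m hm
            have hm' := Finset.mem_Icc.mp hm
            rw [hcp m hm'.2, hSl' (m - 1) (by omega)]
          · rw [hct1, Nat.add_sub_cancel, hSl' t le_rfl, ← hnt_def]
        have hmem' : ∀ m, 1 ≤ m → m ≤ t + 1 → c' m ∈ indexSet k β := by
          intro m h1 h2
          by_cases hmt : m ≤ t
          · rw [hcp m hmt]; exact hmem m h1 hmt
          · have hme : m = t + 1 := by omega
            rw [hme, hct1]; exact hi
        have hx' : nt - i = n0 - Sl c' (t + 1) := by
          rw [hSlt1, hnt_def]; omega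
        have hTi : W c t n0 * (β i * x (nt - i) / den nt)
            = W c' (t + 1) n0 * x (n0 - Sl c' (t + 1)) := by
          rw [hW', hx']; ring
        by_cases hfr' : ∀ N1 N2, 0 < N1 → N1 ≤ N2 → N2 ≤ t + 1 →
            (∑ m ∈ Icc N1 N2, c' m) ∉ indexSet k B
        · have hle := ih (t + 1) (by omega) c' hmem' hfr' n0 hn0
          rw [hTi]
          exact hle.trans (le_add_of_nonneg_right hbnn)
        · -- landing case
          push_neg at hfr'
          obtain ⟨N1, N2, hN1pos, hN12, hN2le, hsB⟩ := hfr'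
          have hN2 : N2 = t + 1 := by
            by_contra hne
            have hN2t : N2 ≤ t := by omega
            have heq : (∑ m ∈ Icc N1 N2, c' m) = ∑ m ∈ Icc N1 N2, c m := by
              apply Finset.sum_congr rfl
              intro m hm
              exact hcp m (le_trans (Finset.mem_Icc.mp hm).2 hN2t)
            rw [heq] at hsB
            exact hfr N1 N2 hN1pos hN12 hN2t hsB
          subst hN2
          set s := ∑ m ∈ Icc N1 (t + 1), c' m with hs_def
          have hsIcc : s ∈ Icc 1 k := Finset.filter_subset _ _ hsB
          have hBs : 0 < B s := (Finset.mem_filter.mp hsB).2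
          have hN1mem : N1 ∈ Icc 1 (t + 1) := Finset.mem_Icc.mpr ⟨hN1pos, hN12⟩
          set n' := n0 - Sl c' (t + 1) with hn'_def
          set d := n0 - Sl c' (N1 - 1) with hd_def
          have hsplit : Sl c' (t + 1) = Sl c' (N1 - 1) + s := by
            rw [hSl_eq, hSl_eq, hs_def]
            rw [show (1:ℕ) = 0 + 1 from rfl, icc_succ_left_eq_ioc,
              icc_succ_left_eq_ioc,
              show Icc N1 (t + 1) = Ioc (N1 - 1) (t + 1) by
                rw [← icc_succ_left_eq_ioc]; congr 1; omega]
            exact (Finset.sum_Ioc_consecutive _ (Nat.zero_le _) (by omega)).symm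
          have hds : d - s = n' := by rw [hd_def, hn'_def, hsplit]; omega
          have hdenBs : B s * x n' ≤ den d := by
            rw [← hds]; exact hdenB d s hsIcc
          have hfact : β (c' N1) / den d * x n' ≤ A * G / B s := by
            rw [div_mul_eq_mul_div, div_le_div_iff₀ (hden_pos d) hBs]
            have h1 : β (c' N1) * (B s * x n') ≤ β (c' N1) * den d :=
              mul_le_mul_of_nonneg_left hdenBs (hβ _)
            have h2 : β (c' N1) ≤ A * G :=
              hβAG _ (Finset.filter_subset _ _ (hmem' N1 hN1pos hN12))
            calc β (c' N1) * x n' * B s = β (c' N1) * (B s * x n') := by ring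
              _ ≤ β (c' N1) * den d := h1
              _ ≤ A * G * den d := mul_le_mul_of_nonneg_right h2 (hden_pos d).le
          have hfactCB : β (c' N1) / den d * x n' ≤ CB := by
            refine hfact.trans ?_
            rw [hCB_def]
            exact Finset.single_le_sum (f := fun j => A * G / B j)
              (fun j _ => div_nonneg (mul_nonneg hA hG0) (hB j)) hsB
          have hWsplit : W c' (t + 1) n0 =
              (∏ m ∈ (Icc 1 (t + 1)).erase N1, β (c' m) / den (n0 - Sl c' (m - 1))) *
              (β (c' N1) / den d) := by
            rw [hW_eq, hd_def]
            exact (Finset.prod_erase_mul _ _ hN1mem).symm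
          have hprod_le : (∏ m ∈ (Icc 1 (t + 1)).erase N1,
              β (c' m) / den (n0 - Sl c' (m - 1))) ≤ G ^ η := by
            have h1 : (∏ m ∈ (Icc 1 (t + 1)).erase N1,
                β (c' m) / den (n0 - Sl c' (m - 1)))
                ≤ ∏ _m ∈ (Icc 1 (t + 1)).erase N1, G := by
              apply Finset.prod_le_prod
              · intro m _; exact div_nonneg (hβ _) (hden_pos _).le
              · intro m hm
                have hm' := Finset.mem_Icc.mp (Finset.mem_of_mem_erase hm)
                calc β (c' m) / den (n0 - Sl c' (m - 1))
                    ≤ β (c' m) / A := div_le_div_of_nonneg_left (hβ _) hApos (hdenA _)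
                  _ ≤ G := hGβ _ (Finset.filter_subset _ _ (hmem' m hm'.1 hm'.2))
            rw [Finset.prod_const, Finset.card_erase_of_mem hN1mem, Nat.card_Icc] at h1
            calc (∏ m ∈ (Icc 1 (t + 1)).erase N1, β (c' m) / den (n0 - Sl c' (m - 1)))
                ≤ G ^ (t + 1 + 1 - 1 - 1) := h1
              _ ≤ G ^ η := pow_le_pow_right₀ hG1 (by omega)
          rw [hTi]
          have hfinal : W c' (t + 1) n0 * x n' ≤ G ^ η * CB := by
            rw [hWsplit]
            calc (∏ m ∈ (Icc 1 (t + 1)).erase N1, β (c' m) / den (n0 - Sl c' (m - 1))) *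
                  (β (c' N1) / den d) * x n'
                = (∏ m ∈ (Icc 1 (t + 1)).erase N1, β (c' m) / den (n0 - Sl c' (m - 1))) *
                  (β (c' N1) / den d * x n') := by ring
              _ ≤ G ^ η * CB := by
                  apply mul_le_mul hprod_le hfactCB ?pos (pow_nonneg hG0 _)
                  exact mul_nonneg (div_nonneg (hβ _) (hden_pos _).le) (hxnn _)
          rw [hn'_def] at hfinal
          rw [← hb_def] at hfinal
          exact hfinal.trans (le_add_of_nonneg_left (bdAux_nonneg hann hbnn k r))
      -- combine
      have hsum_le : ∑ i ∈ indexSet k β, W c t n0 * (β i * x (nt - i) / den nt)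
          ≤ (k : ℝ) * (bdAux a b k r + b) := by
        calc ∑ i ∈ indexSet k β, W c t n0 * (β i * x (nt - i) / den nt)
            ≤ ∑ _i ∈ indexSet k β, (bdAux a b k r + b) := Finset.sum_le_sum hterm
          _ = (indexSet k β).card * (bdAux a b k r + b) := by
              rw [Finset.sum_const, nsmul_eq_mul]
          _ ≤ (k : ℝ) * (bdAux a b k r + b) := by
              apply mul_le_mul_of_nonneg_right
              · have hcard : (indexSet k β).card ≤ k := by
                  calc (indexSet k β).card ≤ (Icc 1 k).card :=
                        Finset.card_le_card (Finset.filter_subset _ _)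
                    _ = k := by rw [Nat.card_Icc]; omega
                exact_mod_cast hcard
              · exact add_nonneg (bdAux_nonneg hann hbnn k r) hbnn
      calc W c t n0 * x nt
          ≤ W c t n0 * (L + ∑ i ∈ indexSet k β, β i * x (nt - i) / den nt) :=
            mul_le_mul_of_nonneg_left hx_step hW_nonneg
        _ = W c t n0 * L + ∑ i ∈ indexSet k β, W c t n0 * (β i * x (nt - i) / den nt) := by
            rw [mul_add, Finset.mul_sum]
        _ ≤ G ^ η * L + (k : ℝ) * (bdAux a b k r + b) := by
            have hWL : W c t n0 * L ≤ G ^ η * L := mul_le_mul_of_nonneg_right hW_le hLnn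
            linarith
        _ = bdAux a b k (r + 1) := by
            rw [show bdAux a b k (r + 1) = a + ↑k * (bdAux a b k r + b) from rfl, ha_def]
  -- conclude
  refine ⟨bdAux a b k η + 1, by
    have := bdAux_nonneg hann hbnn k η
    linarith, k * η + k, ?_⟩
  intro n hn
  have hmain := main η 0 (by omega) (fun _ => 0)
    (by intro m h1 h2; omega)
    (by intro N1 N2 h1 h2 h3; exact absurd (lt_of_lt_of_le h1 (le_trans h2 h3)) (lt_irrefl 0))
    n (by omega)
  have hW0 : W (fun _ => 0) 0 n = 1 := by
    rw [hW_eq]; simp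
  have hS0 : Sl (fun _ => 0) 0 = 0 := by
    rw [hSl_eq]; simp
  rw [hW0, hS0, one_mul, Nat.sub_zero] at hmain
  linarith [bdAux_nonneg hann hbnn k η]
end

section
/- Suppose A = 0, α = 0, I_β ⊆ I_B, and I_γ ⊆ I_C. Then there exist M > 0 and N ∈ ℕ such that x_n ≤ M for all n > N. -/
open Finset

theorem stmt_7
    (k : ℕ) (hk : 0 < k)
    (α A p q : ℝ) (β γ B C δ ε D E : ℕ → ℝ)
    (hα : 0 ≤ α) (hA : 0 ≤ A) (hp : 0 ≤ p) (hq : 0 ≤ q)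
    (hβ : ∀ i, 0 ≤ β i) (hγ : ∀ i, 0 ≤ γ i) (hB : ∀ j, 0 ≤ B j) (hC : ∀ j, 0 ≤ C j)
    (hδ : ∀ i, 0 ≤ δ i) (hε : ∀ i, 0 ≤ ε i) (hD : ∀ j, 0 ≤ D j) (hE : ∀ j, 0 ≤ E j)
    (x y : ℕ → ℝ)
    (hxnn : ∀ n, 0 ≤ x n) (hynn : ∀ n, 0 ≤ y n)
    (hxden : ∀ n, k ≤ n →
      0 < A + ∑ j ∈ Icc 1 k, B j * x (n - j) + ∑ j ∈ Icc 1 k, C j * y (n - j))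
    (hyden : ∀ n, k ≤ n →
      0 < q + ∑ j ∈ Icc 1 k, D j * x (n - j) + ∑ j ∈ Icc 1 k, E j * y (n - j))
    (hxrec : ∀ n, k ≤ n → x n =
      (α + ∑ i ∈ Icc 1 k, β i * x (n - i) + ∑ i ∈ Icc 1 k, γ i * y (n - i)) /
      (A + ∑ j ∈ Icc 1 k, B j * x (n - j) + ∑ j ∈ Icc 1 k, C j * y (n - j)))
    (hyrec : ∀ n, k ≤ n → y n =
      (p + ∑ i ∈ Icc 1 k, δ i * x (n - i) + ∑ i ∈ Icc 1 k, ε i * y (n - i)) /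
      (q + ∑ j ∈ Icc 1 k, D j * x (n - j) + ∑ j ∈ Icc 1 k, E j * y (n - j)))
    (hA0 : A = 0) (hα0 : α = 0)
    (hsubβ : indexSet k β ⊆ indexSet k B)
    (hsubγ : indexSet k γ ⊆ indexSet k C) :
    ∃ M : ℝ, 0 < M ∧ ∃ N : ℕ, ∀ n, N < n → x n ≤ M := by
  obtain ⟨M, hM⟩ : ∃ M : ℝ, M = 1 + ∑ i ∈ Icc 1 k, (β i / B i + γ i / C i) := ⟨_, rfl⟩
  have hsum : 0 ≤ ∑ i ∈ Icc 1 k, (β i / B i + γ i / C i) :=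
    Finset.sum_nonneg fun i _ =>
      add_nonneg (div_nonneg (hβ i) (hB i)) (div_nonneg (hγ i) (hC i))
  have hMpos : 0 < M := by rw [hM]; linarith
  refine ⟨M, hMpos, k, fun n hn => ?_⟩
  have hkn : k ≤ n := hn.le
  have hβB : ∀ i ∈ Icc 1 k, β i ≤ M * B i := by
    intro i hi
    rcases eq_or_lt_of_le (hβ i) with h | h
    · exact le_trans h.symm.le (mul_nonneg hMpos.le (hB i))
    · have hiB : i ∈ indexSet k B := hsubβ (by simp [indexSet, hi, h])
      have hBi : 0 < B i := by
        simp only [indexSet, Finset.mem_filter] at hiB; exact hiB.2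
      have h1 : β i / B i ≤ ∑ j ∈ Icc 1 k, (β j / B j + γ j / C j) := by
        calc β i / B i ≤ β i / B i + γ i / C i := by
              have := div_nonneg (hγ i) (hC i); linarith
          _ ≤ _ := Finset.single_le_sum (f := fun j => β j / B j + γ j / C j)
              (fun j _ => add_nonneg (div_nonneg (hβ j) (hB j)) (div_nonneg (hγ j) (hC j))) hi
      have : β i / B i ≤ M := by linarith
      calc β i = (β i / B i) * B i := by field_simp
        _ ≤ M * B i := mul_le_mul_of_nonneg_right this (hB i)
  have hγC : ∀ i ∈ Icc 1 k, γ i ≤ M * C i := by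
    intro i hi
    rcases eq_or_lt_of_le (hγ i) with h | h
    · exact le_trans h.symm.le (mul_nonneg hMpos.le (hC i))
    · have hiC : i ∈ indexSet k C := hsubγ (by simp [indexSet, hi, h])
      have hCi : 0 < C i := by
        simp only [indexSet, Finset.mem_filter] at hiC; exact hiC.2
      have h1 : γ i / C i ≤ ∑ j ∈ Icc 1 k, (β j / B j + γ j / C j) := by
        calc γ i / C i ≤ β i / B i + γ i / C i := by
              have := div_nonneg (hβ i) (hB i); linarith
          _ ≤ _ := Finset.single_le_sum (f := fun j => β j / B j + γ j / C j)
              (fun j _ => add_nonneg (div_nonneg (hβ j) (hB j)) (div_nonneg (hγ j) (hC j))) hi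
      have : γ i / C i ≤ M := by linarith
      calc γ i = (γ i / C i) * C i := by field_simp
        _ ≤ M * C i := mul_le_mul_of_nonneg_right this (hC i)
  have hden := hxden n hkn
  have hnum : α + ∑ i ∈ Icc 1 k, β i * x (n - i) + ∑ i ∈ Icc 1 k, γ i * y (n - i)
      ≤ M * (A + ∑ j ∈ Icc 1 k, B j * x (n - j) + ∑ j ∈ Icc 1 k, C j * y (n - j)) := by
    rw [hα0, hA0]
    have h1 : ∑ i ∈ Icc 1 k, β i * x (n - i) ≤ ∑ i ∈ Icc 1 k, M * (B i * x (n - i)) := by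
      apply Finset.sum_le_sum
      intro i hi
      rw [← mul_assoc]
      exact mul_le_mul_of_nonneg_right (hβB i hi) (hxnn _)
    have h2 : ∑ i ∈ Icc 1 k, γ i * y (n - i) ≤ ∑ i ∈ Icc 1 k, M * (C i * y (n - i)) := by
      apply Finset.sum_le_sum
      intro i hi
      rw [← mul_assoc]
      exact mul_le_mul_of_nonneg_right (hγC i hi) (hynn _)
    rw [← Finset.mul_sum] at h1 h2
    linarith
  rw [hxrec n hkn]
  rw [div_le_iff₀ hden]
  linarith
end

section
/- Suppose the sequence {y_n} is bounded above and bounded below by positive constants, i.e. there exist m1, m2 > 0 with m1 ≤ y_n ≤ m2 for all n ∈ ℕ. Suppose I_C ≠ ∅, and that there exists a positive integer η such that for every sequence {c_m}_{m=1}^∞ with c_m ∈ I_β for all m, there exist positive integers N1 ≤ N2 ≤ η with Σ_{m=N1}^{N2} c_m ∈ I_B. Then there exist M > 0 and N ∈ ℕ such that x_n ≤ M for all n > N. -/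
/-!
Write `den n` for the denominator of the `x`-equation. As `y ≥ m1 > 0` and `I_C ≠ ∅`, we have
`den n ≥ d > 0` and `x n ≤ (K + ∑ i ∈ I_β, β i * x (n - i)) / den n` for a constant `K`.
Unfolding this estimate along lags `c₁, c₂, … ∈ I_β` bounds `x n` by a tree whose branches carry
products of factors `β cⱼ / den (n - c₁ - ⋯ - cⱼ₋₁) ≤ (∑ β) / d`. A branch is cut as soon as a
block of consecutive lags sums to some `j ∈ I_B`: the denominator at the start of the block
contains `B j` times the term reached at its end, which cancels that term. By the iteration
condition every branch is cut within `η` steps, so finitely many bounded terms remain.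
-/

open Finset

theorem Finset.exists_pos_forall_le {ι α : Type*} [LinearOrder α] [Zero α] [NoMaxOrder α]
    {s : Finset ι} {f : ι → α} (hf : ∀ i ∈ s, 0 < f i) : ∃ a, 0 < a ∧ ∀ i ∈ s, a ≤ f i := by
  rcases s.eq_empty_or_nonempty with rfl | hs
  · obtain ⟨a, ha⟩ := exists_gt (0 : α)
    exact ⟨a, ha, by simp⟩
  · exact ⟨s.inf' hs f, (lt_inf'_iff hs).mpr hf, fun i hi => inf'_le f hi⟩

theorem List.getD_mem_of_mem {α : Type*} {l : List α} {d : α} (hd : d ∈ l) (n : ℕ) :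
    l.getD n d ∈ l := by
  rcases lt_or_ge n l.length with h | h
  · rw [List.getD_eq_getElem _ _ h]
    exact List.getElem_mem h
  · rwa [List.getD_eq_default _ _ h]

def InfixSumFree (T : Finset ℕ) (w : List ℕ) : Prop :=
  ∀ v, v <:+: w → v ≠ [] → v.sum ∉ T

theorem InfixSumFree.nil (T : Finset ℕ) : InfixSumFree T [] := fun _ hv hv0 =>
  absurd (List.eq_nil_of_infix_nil hv) hv0

theorem InfixSumFree.concat {T : Finset ℕ} {w : List ℕ} (hw : InfixSumFree T w) (i : ℕ) :
    InfixSumFree T (w ++ [i]) ∨ ∃ v, v <:+ w ++ [i] ∧ v ≠ [] ∧ v.sum ∈ T := by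
  refine or_iff_not_imp_right.mpr fun h v hv hv0 hvT => ?_
  rcases List.infix_concat_iff.mp hv with hsuffix | hinfix
  · exact h ⟨v, hsuffix, hv0, hvT⟩
  · exact hw v hinfix hv0 hvT

theorem iterCond.not_infixSumFree {η : ℕ} {S T : Finset ℕ} (h : iterCond η S T) (hη : 0 < η)
    {w : List ℕ} (hw : ∀ c ∈ w, c ∈ S) (hlen : w.length = η) : ¬ InfixSumFree T w := by
  obtain ⟨i₀, hi₀⟩ := List.exists_mem_of_length_pos (hlen ▸ hη)
  obtain ⟨N₁, N₂, hN₁, hN₁₂, hN₂, hT⟩ :=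
    h (fun m => w.getD (m - 1) i₀) fun m _ => hw _ (List.getD_mem_of_mem hi₀ _)
  refine fun hfree => hfree ((w.drop (N₁ - 1)).take (N₂ + 1 - N₁))
    ((List.take_prefix _ _).isInfix.trans (List.drop_suffix _ _).isInfix) (by simp; omega) ?_
  convert hT using 1
  rw [Nat.Icc_eq_range']
  change _ = ((List.range' N₁ (N₂ + 1 - N₁)).map _).sum
  congr 1
  refine List.ext_getElem (by simp; omega) fun i _ hi => ?_
  simp only [List.length_map, List.length_range'] at hi
  simp only [List.getElem_take, List.getElem_drop, List.getElem_map, List.getElem_range']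
  rw [List.getD_eq_getElem _ _ (by omega)]
  congr 1
  omega

/-- The coefficient of `x (n - w.sum)` obtained by unfolding
`x n ≤ (K + ∑ i, β i * x (n - i)) / den n` along the lags `w`, starting at time `n`. -/
noncomputable def pathWeight (β den : ℕ → ℝ) : ℕ → List ℕ → ℝ
  | _, [] => 1
  | n, c :: w => β c / den n * pathWeight β den (n - c) w

section pathWeight

variable {β den : ℕ → ℝ}

theorem pathWeight_append (n : ℕ) (u v : List ℕ) :
    pathWeight β den n (u ++ v) = pathWeight β den n u * pathWeight β den (n - u.sum) v := by
  induction u generalizing n with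
  | nil => simp [pathWeight]
  | cons c u ih => simp [pathWeight, ih, Nat.sub_sub, mul_assoc]

theorem pathWeight_concat_mul (x : ℕ → ℝ) (n : ℕ) (w : List ℕ) (i : ℕ) :
    pathWeight β den n (w ++ [i]) * x (n - (w ++ [i]).sum) =
      pathWeight β den n w * (β i * x (n - w.sum - i) / den (n - w.sum)) := by
  rw [pathWeight_append, pathWeight, pathWeight, List.sum_append, List.sum_singleton,
    Nat.sub_sub]
  ring

theorem pathWeight_nonneg (hβ : ∀ i, 0 ≤ β i) (hden : ∀ n, 0 ≤ den n) (n : ℕ) (w : List ℕ) :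
    0 ≤ pathWeight β den n w := by
  induction w generalizing n with
  | nil => exact zero_le_one
  | cons c w ih => exact mul_nonneg (div_nonneg (hβ c) (hden n)) (ih _)

theorem pathWeight_le_pow {b d : ℝ} (hβ : ∀ i, 0 ≤ β i) (hd : 0 < d) (hden : ∀ n, d ≤ den n)
    {w : List ℕ} (hb : ∀ c ∈ w, β c ≤ b) (n : ℕ) :
    pathWeight β den n w ≤ (b / d) ^ w.length := by
  induction w generalizing n with
  | nil => simp [pathWeight]
  | cons c w ih =>
    have hc : β c ≤ b := hb c List.mem_cons_self
    rw [pathWeight, List.length_cons, pow_succ']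
    exact mul_le_mul (div_le_div₀ ((hβ c).trans hc) hc hd (hden n))
      (ih (fun c' hc' => hb c' (List.mem_cons_of_mem _ hc')) _)
      (pathWeight_nonneg hβ (fun m => hd.le.trans (hden m)) _ _)
      (div_nonneg ((hβ c).trans hc) hd.le)

theorem pathWeight_cons_mul_le {a X : ℝ} (hβ : ∀ i, 0 ≤ β i) (hden : ∀ n, 0 < den n)
    (ha : 0 < a) {m c : ℕ} {v : List ℕ} (hhit : a * X ≤ den m) :
    pathWeight β den m (c :: v) * X ≤ β c / a * pathWeight β den (m - c) v := by
  have hfactor : β c / den m * X ≤ β c / a := by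
    rw [div_mul_eq_mul_div, div_le_div_iff₀ (hden m) ha, mul_assoc, mul_comm X]
    exact mul_le_mul_of_nonneg_left hhit (hβ c)
  calc pathWeight β den m (c :: v) * X = β c / den m * X * pathWeight β den (m - c) v := by
        rw [pathWeight]; ring
    _ ≤ β c / a * pathWeight β den (m - c) v :=
        mul_le_mul_of_nonneg_right hfactor (pathWeight_nonneg hβ (fun n => (hden n).le) _ _)

end pathWeight

structure LagExpansion (k : ℕ) (S T : Finset ℕ) (K d a : ℝ) (β den x : ℕ → ℝ) : Prop where
  le_of_mem : ∀ i ∈ S, i ≤ k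
  β_nonneg : ∀ i, 0 ≤ β i
  d_pos : 0 < d
  le_den : ∀ n, d ≤ den n
  a_pos : 0 < a
  mul_le_den : ∀ j ∈ T, ∀ n, a * x (n - j) ≤ den n
  step : ∀ n, k ≤ n → x n ≤ (K + ∑ i ∈ S, β i * x (n - i)) / den n

namespace LagExpansion

variable {k : ℕ} {S T : Finset ℕ} {K d a : ℝ} {β den x : ℕ → ℝ}

theorem den_pos (h : LagExpansion k S T K d a β den x) (n : ℕ) : 0 < den n :=
  h.d_pos.trans_le (h.le_den n)

theorem exists_pathWeight_le (h : LagExpansion k S T K d a β den x) (L : ℕ) :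
    ∃ V, ∀ w : List ℕ, (∀ c ∈ w, c ∈ S) → w.length ≤ L → ∀ n, pathWeight β den n w ≤ V := by
  refine ⟨max ((∑ i ∈ S, β i) / d) 1 ^ L, fun w hw hlen n => ?_⟩
  have hb : ∀ c ∈ w, β c ≤ ∑ i ∈ S, β i := fun c hc =>
    single_le_sum (fun i _ => h.β_nonneg i) (hw c hc)
  calc pathWeight β den n w ≤ ((∑ i ∈ S, β i) / d) ^ w.length :=
        pathWeight_le_pow h.β_nonneg h.d_pos h.le_den hb n
    _ ≤ max ((∑ i ∈ S, β i) / d) 1 ^ w.length :=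
        pow_le_pow_left₀ (div_nonneg (sum_nonneg fun i _ => h.β_nonneg i) h.d_pos.le)
          (le_max_left _ _) _
    _ ≤ max ((∑ i ∈ S, β i) / d) 1 ^ L := pow_le_pow_right₀ (le_max_right _ _) hlen

theorem exists_mul_le_of_suffix_sum_mem (h : LagExpansion k S T K d a β den x) (L : ℕ) :
    ∃ Q, ∀ w : List ℕ, (∀ c ∈ w, c ∈ S) → w.length ≤ L →
      (∃ v, v <:+ w ∧ v ≠ [] ∧ v.sum ∈ T) → ∀ n, pathWeight β den n w * x (n - w.sum) ≤ Q := by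
  obtain ⟨V, hV⟩ := h.exists_pathWeight_le L
  have hV0 : 0 ≤ V := zero_le_one.trans (hV [] (by simp) (by simp) 0)
  set b := ∑ i ∈ S, β i
  refine ⟨V * (b / a * V), ?_⟩
  rintro _ hw hlen ⟨_, ⟨u, rfl⟩, hv0, hvT⟩ n
  obtain ⟨c, v, rfl⟩ := List.exists_cons_of_ne_nil hv0
  simp only [List.mem_append, List.mem_cons] at hw
  simp only [List.length_append, List.length_cons] at hlen
  have hc : β c ≤ b := single_le_sum (fun i _ => h.β_nonneg i) (hw c (by simp))
  have hblock : pathWeight β den (n - u.sum) (c :: v) * x (n - u.sum - (c :: v).sum)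
      ≤ b / a * V :=
    (pathWeight_cons_mul_le h.β_nonneg h.den_pos h.a_pos
        (h.mul_le_den _ hvT (n - u.sum))).trans
      (mul_le_mul (div_le_div_of_nonneg_right hc h.a_pos.le)
        (hV v (fun c' hc' => hw c' (by simp [hc'])) (by omega) _)
        (pathWeight_nonneg h.β_nonneg (fun n => (h.den_pos n).le) _ _)
        (div_nonneg (hc.trans' (h.β_nonneg c)) h.a_pos.le))
  rw [pathWeight_append, List.sum_append, ← Nat.sub_sub, mul_assoc]
  exact (mul_le_mul_of_nonneg_left hblock
      (pathWeight_nonneg h.β_nonneg (fun n => (h.den_pos n).le) _ _)).trans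
    (mul_le_mul_of_nonneg_right (hV u (fun c' hc' => hw c' (by simp [hc'])) (by omega) n)
      (mul_nonneg (div_nonneg (hc.trans' (h.β_nonneg c)) h.a_pos.le) hV0))

/-- `t` counts the unfolding steps left before the iteration condition forces a block of lags
summing into `T`. -/
theorem exists_mul_le_of_infixSumFree (h : LagExpansion k S T K d a β den x) {η : ℕ}
    (hiter : iterCond η S T) (hη : 0 < η) (t : ℕ) :
    ∃ C, ∀ w : List ℕ, w.length + t = η → (∀ c ∈ w, c ∈ S) → InfixSumFree T w →
      ∀ n, k * η + k ≤ n → pathWeight β den n w * x (n - w.sum) ≤ C := by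
  induction t with
  | zero => exact ⟨0, fun w hlen hw hfree =>
      absurd hfree (hiter.not_infixSumFree hη hw (by simpa using hlen))⟩
  | succ t ih =>
    obtain ⟨C, hC⟩ := ih
    obtain ⟨V, hV⟩ := h.exists_pathWeight_le η
    obtain ⟨Q, hQ⟩ := h.exists_mul_le_of_suffix_sum_mem η
    refine ⟨V * |K| / d + S.card * max C Q, fun w hlen hw hfree n hn => ?_⟩
    have hsum : w.sum ≤ k * η := by
      have := List.sum_le_card_nsmul w k fun c hc => h.le_of_mem c (hw c hc)
      rw [smul_eq_mul] at this
      nlinarith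
    have hP0 := pathWeight_nonneg h.β_nonneg (fun n => (h.den_pos n).le) n w
    have hbranch : ∀ i ∈ S,
        pathWeight β den n (w ++ [i]) * x (n - (w ++ [i]).sum) ≤ max C Q := by
      intro i hi
      have hw' : ∀ c ∈ w ++ [i], c ∈ S := by simpa [or_imp, forall_and] using ⟨hw, hi⟩
      rcases hfree.concat i with hfree' | hhit
      · exact (hC _ (by simp; omega) hw' hfree' n hn).trans (le_max_left _ _)
      · exact (hQ _ hw' (by simp; omega) hhit n).trans (le_max_right _ _)
    calc pathWeight β den n w * x (n - w.sum)
        ≤ pathWeight β den n w * ((K + ∑ i ∈ S, β i * x (n - w.sum - i)) / den (n - w.sum)) :=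
          mul_le_mul_of_nonneg_left (h.step _ (by omega)) hP0
      _ = pathWeight β den n w * K / den (n - w.sum) +
            ∑ i ∈ S, pathWeight β den n (w ++ [i]) * x (n - (w ++ [i]).sum) := by
          simp only [pathWeight_concat_mul, add_div, mul_add, sum_div, mul_sum, mul_div_assoc]
      _ ≤ V * |K| / d + S.card * max C Q := by
          gcongr ?_ + ?_
          · have hPV := hV w hw (by omega) n
            exact div_le_div₀ (mul_nonneg (hP0.trans hPV) (abs_nonneg K))
              ((mul_le_mul_of_nonneg_left (le_abs_self K) hP0).trans
                (mul_le_mul_of_nonneg_right hPV (abs_nonneg K)))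
              h.d_pos (h.le_den _)
          · simpa using sum_le_card_nsmul S _ _ hbranch

theorem exists_eventually_le (h : LagExpansion k S T K d a β den x) {η : ℕ}
    (hiter : iterCond η S T) (hη : 0 < η) :
    ∃ M : ℝ, 0 < M ∧ ∃ N : ℕ, ∀ n, N < n → x n ≤ M := by
  obtain ⟨C, hC⟩ := h.exists_mul_le_of_infixSumFree hiter hη η
  refine ⟨max C 1, lt_max_of_lt_right one_pos, k * η + k, fun n hn => ?_⟩
  have hx := hC [] (by simp) (by simp) (InfixSumFree.nil T) n hn.le
  rw [pathWeight, one_mul, List.sum_nil, Nat.sub_zero] at hx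
  exact hx.trans (le_max_left _ _)

end LagExpansion

theorem LagExpansion.of_recurrence {k : ℕ} {α A m₁ m₂ : ℝ} {β γ B C x y : ℕ → ℝ} (hA : 0 ≤ A)
    (hβ : ∀ i, 0 ≤ β i) (hγ : ∀ i, 0 ≤ γ i) (hB : ∀ j, 0 ≤ B j) (hC : ∀ j, 0 ≤ C j)
    (hx : ∀ n, 0 ≤ x n) (hy : ∀ n, 0 ≤ y n)
    (hxrec : ∀ n, k ≤ n → x n =
      (α + ∑ i ∈ Icc 1 k, β i * x (n - i) + ∑ i ∈ Icc 1 k, γ i * y (n - i)) /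
      (A + ∑ j ∈ Icc 1 k, B j * x (n - j) + ∑ j ∈ Icc 1 k, C j * y (n - j)))
    (hybd : ∀ n, m₁ ≤ y n ∧ y n ≤ m₂) (hm₁ : 0 < m₁) {j₀ : ℕ} (hj₀ : j₀ ∈ indexSet k C)
    {a : ℝ} (ha : 0 < a) (haB : ∀ j ∈ indexSet k B, a ≤ B j) :
    LagExpansion k (indexSet k β) (indexSet k B) (α + (∑ i ∈ Icc 1 k, γ i) * m₂) (C j₀ * m₁) a
      β (fun n => A + ∑ j ∈ Icc 1 k, B j * x (n - j) + ∑ j ∈ Icc 1 k, C j * y (n - j)) x := by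
  obtain ⟨hj₀k, hCj₀⟩ := mem_filter.mp hj₀
  have hBx (n) : 0 ≤ ∑ j ∈ Icc 1 k, B j * x (n - j) :=
    sum_nonneg fun j _ => mul_nonneg (hB j) (hx _)
  have hCy (n) : 0 ≤ ∑ j ∈ Icc 1 k, C j * y (n - j) :=
    sum_nonneg fun j _ => mul_nonneg (hC j) (hy _)
  have hden (n) :
      C j₀ * m₁ ≤ A + ∑ j ∈ Icc 1 k, B j * x (n - j) + ∑ j ∈ Icc 1 k, C j * y (n - j) := by
    have := single_le_sum (fun j _ => mul_nonneg (hC j) (hy (n - j))) hj₀k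
    have := mul_le_mul_of_nonneg_left (hybd (n - j₀)).1 hCj₀.le
    linarith [hBx n]
  refine ⟨fun i hi => (mem_Icc.mp (mem_filter.mp hi).1).2, hβ, mul_pos hCj₀ hm₁, hden, ha,
    fun j hj n => ?_, fun n hn => ?_⟩
  · have := single_le_sum (fun j _ => mul_nonneg (hB j) (hx (n - j))) (mem_filter.mp hj).1
    have := mul_le_mul_of_nonneg_right (haB j hj) (hx (n - j))
    linarith [hCy n]
  · rw [hxrec n hn, indexSet,
      sum_filter_of_ne fun i _ hi => (hβ i).lt_of_ne' (left_ne_zero_of_mul hi)]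
    refine div_le_div_of_nonneg_right ?_ ((mul_pos hCj₀ hm₁).le.trans (hden n))
    have : ∑ i ∈ Icc 1 k, γ i * y (n - i) ≤ (∑ i ∈ Icc 1 k, γ i) * m₂ := by
      rw [sum_mul]
      exact sum_le_sum fun i _ => mul_le_mul_of_nonneg_left (hybd _).2 (hγ i)
    linarith

theorem stmt_8_general
    (k : ℕ)
    (α A : ℝ) (β γ B C : ℕ → ℝ)
    (hA : 0 ≤ A)
    (hβ : ∀ i, 0 ≤ β i) (hγ : ∀ i, 0 ≤ γ i) (hB : ∀ j, 0 ≤ B j) (hC : ∀ j, 0 ≤ C j)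
    (x y : ℕ → ℝ)
    (hxnn : ∀ n, 0 ≤ x n) (hynn : ∀ n, 0 ≤ y n)
    (hxrec : ∀ n, k ≤ n → x n =
      (α + ∑ i ∈ Icc 1 k, β i * x (n - i) + ∑ i ∈ Icc 1 k, γ i * y (n - i)) /
      (A + ∑ j ∈ Icc 1 k, B j * x (n - j) + ∑ j ∈ Icc 1 k, C j * y (n - j)))
    (m1 m2 : ℝ) (hm1 : 0 < m1)
    (hybd : ∀ n, m1 ≤ y n ∧ y n ≤ m2)
    (hCne : indexSet k C ≠ ∅)
    (hη : ∃ η : ℕ, 0 < η ∧ iterCond η (indexSet k β) (indexSet k B)) :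
    ∃ M : ℝ, 0 < M ∧ ∃ N : ℕ, ∀ n, N < n → x n ≤ M := by
  obtain ⟨η, hη, hiter⟩ := hη
  obtain ⟨j₀, hj₀⟩ := nonempty_iff_ne_empty.mpr hCne
  obtain ⟨a, ha, haB⟩ := Finset.exists_pos_forall_le (s := indexSet k B) (f := B)
    fun j hj => (mem_filter.mp hj).2
  exact (LagExpansion.of_recurrence hA hβ hγ hB hC hxnn hynn hxrec hybd hm1 hj₀ ha haB
    ).exists_eventually_le hiter hη

theorem stmt_8
    (k : ℕ) (hk : 0 < k)
    (α A p q : ℝ) (β γ B C δ ε D E : ℕ → ℝ)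
    (hα : 0 ≤ α) (hA : 0 ≤ A) (hp : 0 ≤ p) (hq : 0 ≤ q)
    (hβ : ∀ i, 0 ≤ β i) (hγ : ∀ i, 0 ≤ γ i) (hB : ∀ j, 0 ≤ B j) (hC : ∀ j, 0 ≤ C j)
    (hδ : ∀ i, 0 ≤ δ i) (hε : ∀ i, 0 ≤ ε i) (hD : ∀ j, 0 ≤ D j) (hE : ∀ j, 0 ≤ E j)
    (x y : ℕ → ℝ)
    (hxnn : ∀ n, 0 ≤ x n) (hynn : ∀ n, 0 ≤ y n)
    (hxden : ∀ n, k ≤ n →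
      0 < A + ∑ j ∈ Icc 1 k, B j * x (n - j) + ∑ j ∈ Icc 1 k, C j * y (n - j))
    (hyden : ∀ n, k ≤ n →
      0 < q + ∑ j ∈ Icc 1 k, D j * x (n - j) + ∑ j ∈ Icc 1 k, E j * y (n - j))
    (hxrec : ∀ n, k ≤ n → x n =
      (α + ∑ i ∈ Icc 1 k, β i * x (n - i) + ∑ i ∈ Icc 1 k, γ i * y (n - i)) /
      (A + ∑ j ∈ Icc 1 k, B j * x (n - j) + ∑ j ∈ Icc 1 k, C j * y (n - j)))
    (hyrec : ∀ n, k ≤ n → y n =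
      (p + ∑ i ∈ Icc 1 k, δ i * x (n - i) + ∑ i ∈ Icc 1 k, ε i * y (n - i)) /
      (q + ∑ j ∈ Icc 1 k, D j * x (n - j) + ∑ j ∈ Icc 1 k, E j * y (n - j)))
    (m1 m2 : ℝ) (hm1 : 0 < m1) (hm2 : 0 < m2)
    (hybd : ∀ n, m1 ≤ y n ∧ y n ≤ m2)
    (hCne : indexSet k C ≠ ∅)
    (hη : ∃ η : ℕ, 0 < η ∧ iterCond η (indexSet k β) (indexSet k B)) :
    ∃ M : ℝ, 0 < M ∧ ∃ N : ℕ, ∀ n, N < n → x n ≤ M :=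
  stmt_8_general k α A β γ B C hA hβ hγ hB hC x y hxnn hynn hxrec m1 m2 hm1 hybd hCne hη
end
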